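/- arXiv:2012.08380 — 8 statements merged into one kernel-verified Lean document; each statement's English description precedes it below -/
import Mathlib

section
/- Let f : ℝ → ℝ be differentiable with fixed point x* and |f'(x*)| = μ ∈ (0,1). If a sequence satisfies x_{n+1} = f(x_n), x_n → x*, and x_n ≠ x* for all n, then (log |x_n - x*|)/n → log μ. -/
/-!
Near the fixed point the ratio `(x (n+1) - L) / (x n - L)` is the slope of `f` between `L` and
`x n`, so it tends to `f'(L)`. Hence the increments of `log |x n - L|` tend to `log μ`, and by
Cesàro averaging so does `log |x n - L| / n`.
-/

open Filter Topology

theorem tendsto_div_natCast_of_tendsto_succ_sub {a : ℕ → ℝ} {c : ℝ}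
    (h : Tendsto (fun n => a (n + 1) - a n) atTop (𝓝 c)) :
    Tendsto (fun n : ℕ => a n / n) atTop (𝓝 c) := by
  have hmean : Tendsto (fun n : ℕ => (a n - a 0) / n) atTop (𝓝 c) :=
    h.cesaro.congr fun n => by rw [Finset.sum_range_sub a n]; ring
  have hinit : Tendsto (fun n : ℕ => a 0 / n) atTop (𝓝 0) :=
    tendsto_const_div_atTop_nhds_zero_nat _
  simpa [sub_div] using hmean.add hinit

theorem tendsto_log_abs_sub_succ_sub_of_hasDerivAt {f : ℝ → ℝ} {f' L : ℝ}
    (hf : HasDerivAt f f' L) (hf' : f' ≠ 0) (hfix : f L = L)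
    {x : ℕ → ℝ} (hrec : ∀ n, x (n + 1) = f (x n))
    (hlim : Tendsto x atTop (𝓝 L)) (hne : ∀ n, x n ≠ L) :
    Tendsto (fun n => Real.log |x (n + 1) - L| - Real.log |x n - L|) atTop
      (𝓝 (Real.log |f'|)) := by
  have hslope : Tendsto (fun n => slope f L (x n)) atTop (𝓝 f') :=
    hf.tendsto_slope.comp <| tendsto_nhdsWithin_iff.mpr ⟨hlim, .of_forall hne⟩
  have hlog := (Real.continuousAt_log (abs_ne_zero.mpr hf')).tendsto.comp hslope.abs
  refine hlog.congr fun n => ?_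
  have hsub : ∀ k, |x k - L| ≠ 0 := fun k => abs_ne_zero.mpr (sub_ne_zero.mpr (hne k))
  rw [Function.comp_apply, slope_def_field, hfix, ← hrec n, abs_div,
    Real.log_div (hsub _) (hsub n)]

theorem stmt1_general (f : ℝ → ℝ) (hf : Differentiable ℝ f) (L μ : ℝ)
    (hfix : f L = L) (hμ : |deriv f L| = μ) (hμ0 : 0 < μ)
    (x : ℕ → ℝ) (hrec : ∀ n, x (n + 1) = f (x n))
    (hlim : Tendsto x atTop (𝓝 L)) (hne : ∀ n, x n ≠ L) :
    Tendsto (fun n : ℕ => Real.log |x n - L| / n) atTop (𝓝 (Real.log μ)) := by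
  have hderiv : deriv f L ≠ 0 := abs_pos.mp (hμ ▸ hμ0)
  apply tendsto_div_natCast_of_tendsto_succ_sub
  rw [← hμ]
  exact tendsto_log_abs_sub_succ_sub_of_hasDerivAt (hf L).hasDerivAt hderiv hfix hrec hlim hne

theorem stmt1 (f : ℝ → ℝ) (hf : Differentiable ℝ f) (L μ : ℝ)
    (hfix : f L = L) (hμ : |deriv f L| = μ) (hμ0 : 0 < μ) (hμ1 : μ < 1)
    (x : ℕ → ℝ) (hrec : ∀ n, x (n + 1) = f (x n))
    (hlim : Tendsto x atTop (𝓝 L)) (hne : ∀ n, x n ≠ L) :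
    Tendsto (fun n : ℕ => Real.log |x n - L| / n) atTop (𝓝 (Real.log μ)) :=
  stmt1_general f hf L μ hfix hμ hμ0 x hrec hlim hne
end

section
/- Fix σ, λ > 0, d ∈ ℝ, q ≥ 0 and a phase-type representation (α, T) with t = −T1. Define the map sending a > 2d/σ² to f(a) = (d + √(d² + σ²(2λ + 2q − σ² b(a) t)))/σ², where b(a) = (2λ/σ²) α((a − 2d/σ²)I − T)^{-1}. Then f is monotone increasing in a (i.e., a' > a > 2d/σ² implies f(a') > f(a)), and for all a > 2d/σ², f(a) > max(2d/σ², 0). -/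
/-!
For `s > 0` the matrix `sI - T` has nonpositive off-diagonal entries and positive row sums
`s - ∑ⱼ Tᵢⱼ`, so a minimum principle shows that it is invertible with a nonnegative inverse.
Hence `L(s) = α(sI - T)⁻¹t` satisfies `L(s) = 1 - s·α(sI - T)⁻¹1 < 1`, and the resolvent identity
`L(s) - L(s') = (s' - s)·α(sI - T)⁻¹(s'I - T)⁻¹t` shows that `L` is antitone. It is strictly
antitone because `L` is a rational function: constant on an interval, it would be constant up to
`s = 0`, where `L(0) = α(-T)⁻¹t = α1 = 1`. Finally the radicand in `f(a)` equals
`d² + σ²(2λ(1 - L(a - 2d/σ²)) + 2q)`, which exceeds `d²` and increases with `a`.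
-/

open Matrix Polynomial

section SubGenerator

variable {ι : Type*} [Fintype ι] [DecidableEq ι] {T : Matrix ι ι ℝ}

lemma smul_one_sub_mulVec_apply_le_of_isMin (hoff : ∀ i j, i ≠ j → 0 ≤ T i j) (s : ℝ)
    {x : ι → ℝ} {i : ι} (hi : ∀ j, x i ≤ x j) :
    ((s • 1 - T) *ᵥ x) i ≤ (s - ∑ j, T i j) * x i := by
  have hTx : (∑ j, T i j) * x i ≤ (T *ᵥ x) i := by
    rw [Finset.sum_mul, mulVec, dotProduct, ← sub_nonneg, ← Finset.sum_sub_distrib]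
    refine Finset.sum_nonneg fun j _ => ?_
    rw [← mul_sub]
    rcases eq_or_ne i j with rfl | hij
    · simp
    · exact mul_nonneg (hoff i j hij) (sub_nonneg.2 (hi j))
  simp only [sub_mulVec, smul_mulVec, one_mulVec, Pi.sub_apply, Pi.smul_apply, smul_eq_mul]
  linarith

lemma pos_of_smul_one_sub_mulVec_pos (hoff : ∀ i j, i ≠ j → 0 ≤ T i j)
    (hrow : ∀ i, ∑ j, T i j ≤ 0) {s : ℝ} (hs : 0 < s) {x : ι → ℝ}
    (hx : ∀ i, 0 < ((s • 1 - T) *ᵥ x) i) (i : ι) : 0 < x i := by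
  have : Nonempty ι := ⟨i⟩
  obtain ⟨k, hk⟩ := Finite.exists_min x
  have hsk : 0 < s - ∑ j, T k j := by linarith [hrow k]
  have hxk : 0 < x k :=
    pos_of_mul_pos_right ((hx k).trans_le (smul_one_sub_mulVec_apply_le_of_isMin hoff s hk)) hsk.le
  exact hxk.trans_le (hk i)

lemma nonneg_of_smul_one_sub_mulVec_nonneg (hoff : ∀ i j, i ≠ j → 0 ≤ T i j)
    (hrow : ∀ i, ∑ j, T i j ≤ 0) {s : ℝ} (hs : 0 < s) {x : ι → ℝ}
    (hx : 0 ≤ (s • 1 - T) *ᵥ x) : 0 ≤ x := by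
  intro i
  have : Nonempty ι := ⟨i⟩
  obtain ⟨k, hk⟩ := Finite.exists_min x
  have hsk : 0 < s - ∑ j, T k j := by linarith [hrow k]
  have hxk : 0 ≤ x k :=
    nonneg_of_mul_nonneg_right ((hx k).trans (smul_one_sub_mulVec_apply_le_of_isMin hoff s hk)) hsk
  exact hxk.trans (hk i)

lemma isUnit_det_smul_one_sub (hoff : ∀ i j, i ≠ j → 0 ≤ T i j)
    (hrow : ∀ i, ∑ j, T i j ≤ 0) {s : ℝ} (hs : 0 < s) : IsUnit (s • 1 - T).det := by
  rw [isUnit_iff_ne_zero, Ne, ← exists_mulVec_eq_zero_iff]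
  rintro ⟨x, hx0, hx⟩
  have hnonneg : 0 ≤ x := nonneg_of_smul_one_sub_mulVec_nonneg hoff hrow hs hx.ge
  have hnonpos : 0 ≤ -x :=
    nonneg_of_smul_one_sub_mulVec_nonneg hoff hrow hs (by rw [mulVec_neg, hx, neg_zero])
  exact hx0 (le_antisymm (neg_nonneg.1 hnonpos) hnonneg)

lemma inv_smul_one_sub_mulVec_nonneg (hoff : ∀ i j, i ≠ j → 0 ≤ T i j)
    (hrow : ∀ i, ∑ j, T i j ≤ 0) {s : ℝ} (hs : 0 < s) {v : ι → ℝ} (hv : 0 ≤ v) :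
    0 ≤ (s • 1 - T)⁻¹ *ᵥ v := by
  refine nonneg_of_smul_one_sub_mulVec_nonneg hoff hrow hs ?_
  rwa [mulVec_mulVec, mul_nonsing_inv _ (isUnit_det_smul_one_sub hoff hrow hs), one_mulVec]

end SubGenerator

section RationalIdentity

variable {K ι : Type*} [Field K] [Fintype ι] [DecidableEq ι]

lemma eval_charmatrix_mapMatrix (T : Matrix ι ι K) (x : K) :
    (evalRingHom x).mapMatrix (charmatrix T) = x • 1 - T := by
  ext i j
  rcases eq_or_ne i j with rfl | hij
  · simp
  · simp [hij]

lemma dotProduct_inv_smul_one_sub_mulVec_eq_of_infinite (T : Matrix ι ι K) (u v : ι → K)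
    {c : K} {S : Set K} (hS : S.Infinite)
    (hSc : ∀ x ∈ S, IsUnit (x • 1 - T).det ∧ u ⬝ᵥ ((x • 1 - T)⁻¹ *ᵥ v) = c)
    {y : K} (hy : IsUnit (y • 1 - T).det) : u ⬝ᵥ ((y • 1 - T)⁻¹ *ᵥ v) = c := by
  -- By Cramer's rule, `det (xI - T) * (u (xI - T)⁻¹ v - c)` is a polynomial in `x`.
  set P : K[X] := (C ∘ u) ⬝ᵥ ((charmatrix T).adjugate *ᵥ (C ∘ v)) - C c * T.charpoly
  have hP : ∀ x, IsUnit (x • 1 - T).det →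
      P.eval x = (x • 1 - T).det * (u ⬝ᵥ ((x • 1 - T)⁻¹ *ᵥ v) - c) := by
    intro x hx
    have hadj : (charmatrix T).adjugate.map (evalRingHom x) = (x • 1 - T).adjugate := by
      rw [← eval_charmatrix_mapMatrix, ← RingHom.map_adjugate]
      rfl
    have hdet : T.charpoly.eval x = (x • 1 - T).det := by
      rw [charpoly, ← coe_evalRingHom, RingHom.map_det, eval_charmatrix_mapMatrix]
    have hdot : ((C ∘ u) ⬝ᵥ ((charmatrix T).adjugate *ᵥ (C ∘ v))).eval x
        = u ⬝ᵥ ((x • 1 - T).adjugate *ᵥ v) := by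
      rw [← coe_evalRingHom, RingHom.map_dotProduct]
      congr 1
      · ext i; simp
      · funext i
        rw [Function.comp_apply, RingHom.map_mulVec, hadj]
        congr 2
        funext j; simp
    rw [eval_sub, eval_mul, eval_C, hdet, hdot, inv_def, smul_mulVec, dotProduct_smul,
      smul_eq_mul, Ring.inverse_eq_inv', mul_sub, ← mul_assoc, mul_inv_cancel₀ hx.ne_zero,
      one_mul, mul_comm]
  have hP0 : P = 0 := by
    refine eq_zero_of_infinite_isRoot P (hS.mono fun x hx => ?_)
    rw [Set.mem_ofPred_eq, IsRoot, hP x (hSc x hx).1, (hSc x hx).2, sub_self, mul_zero]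
  have hPy := hP y hy
  rw [hP0, eval_zero, eq_comm, mul_eq_zero, sub_eq_zero] at hPy
  exact hPy.resolve_left hy.ne_zero

end RationalIdentity

lemma isUnit_of_forall_mem_spectrum_re_neg {ι : Type*} [Fintype ι] [DecidableEq ι]
    {T : Matrix ι ι ℝ}
    (heig : ∀ μ ∈ spectrum ℂ (T.map (Complex.ofReal : ℝ → ℂ)), μ.re < 0) : IsUnit T := by
  have h0 : (0 : ℂ) ∉ spectrum ℂ (T.map (Complex.ofReal : ℝ → ℂ)) :=
    fun h => (heig 0 h).false
  rw [spectrum.zero_mem_iff, not_not, isUnit_iff_isUnit_det] at h0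
  rw [isUnit_iff_isUnit_det, isUnit_iff_ne_zero]
  intro hdet
  have hmap := Complex.ofRealHom.map_det T
  rw [hdet, map_zero] at hmap
  exact h0.ne_zero hmap.symm

section PhaseType

variable {ι : Type*} [Fintype ι] [DecidableEq ι] {α : ι → ℝ} {T : Matrix ι ι ℝ}

/-- The Laplace transform of the phase-type distribution with representation `(α, T)`,
whose exit vector is `t = -T 1`. -/
noncomputable def phaseTypeLaplace (α : ι → ℝ) (T : Matrix ι ι ℝ) (s : ℝ) : ℝ :=
  α ⬝ᵥ ((s • 1 - T)⁻¹ *ᵥ (-T *ᵥ 1))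

lemma phaseTypeLaplace_zero (hT : IsUnit T) (hα1 : ∑ i, α i = 1) :
    phaseTypeLaplace α T 0 = 1 := by
  rw [phaseTypeLaplace, zero_smul, zero_sub, mulVec_mulVec,
    nonsing_inv_mul _ ((isUnit_iff_isUnit_det _).1 hT.neg), one_mulVec, dotProduct_one, hα1]

lemma phaseTypeLaplace_lt_one (hoff : ∀ i j, i ≠ j → 0 ≤ T i j) (hrow : ∀ i, ∑ j, T i j ≤ 0)
    (hα0 : 0 ≤ α) (hα1 : ∑ i, α i = 1) {s : ℝ} (hs : 0 < s) :
    phaseTypeLaplace α T s < 1 := by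
  set M : Matrix ι ι ℝ := s • 1 - T
  have hM := isUnit_det_smul_one_sub hoff hrow hs
  have hM1 : -T *ᵥ 1 + s • 1 = M *ᵥ 1 := by
    simp only [M, sub_mulVec, smul_mulVec, one_mulVec, neg_mulVec]
    abel
  have hexit : M⁻¹ *ᵥ (-T *ᵥ 1) = 1 - s • (M⁻¹ *ᵥ 1) := by
    rw [eq_sub_iff_add_eq, ← mulVec_smul, ← mulVec_add, hM1, mulVec_mulVec,
      nonsing_inv_mul _ hM, one_mulVec]
  have hpos : ∀ i, 0 < (M⁻¹ *ᵥ 1) i := by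
    refine pos_of_smul_one_sub_mulVec_pos hoff hrow hs fun i => ?_
    rw [mulVec_mulVec, mul_nonsing_inv _ hM, one_mulVec]
    exact one_pos
  obtain ⟨i, hi⟩ : ∃ i, 0 < α i := by
    by_contra! h
    linarith [Finset.sum_nonpos fun i (_ : i ∈ Finset.univ) => h i]
  have hαw : 0 < α ⬝ᵥ (M⁻¹ *ᵥ 1) :=
    Finset.sum_pos' (fun j _ => mul_nonneg (hα0 j) (hpos j).le)
      ⟨i, Finset.mem_univ i, mul_pos hi (hpos i)⟩
  rw [phaseTypeLaplace, hexit, dotProduct_sub, dotProduct_smul, dotProduct_one, hα1, smul_eq_mul]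
  linarith [mul_pos hs hαw]

lemma phaseTypeLaplace_antitoneOn (hoff : ∀ i j, i ≠ j → 0 ≤ T i j)
    (hrow : ∀ i, ∑ j, T i j ≤ 0) (hα0 : 0 ≤ α) :
    AntitoneOn (phaseTypeLaplace α T) (Set.Ioi 0) := by
  intro s hs s' hs' hss'
  have hR := isUnit_det_smul_one_sub hoff hrow hs
  have hR' := isUnit_det_smul_one_sub hoff hrow (Set.mem_Ioi.1 hs')
  have hexit : 0 ≤ -T *ᵥ 1 := fun i => by
    simpa [neg_mulVec, mulVec, dotProduct] using hrow i
  have hdiff : phaseTypeLaplace α T s - phaseTypeLaplace α T s' =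
      (s' - s) * (α ⬝ᵥ ((s • 1 - T)⁻¹ *ᵥ ((s' • 1 - T)⁻¹ *ᵥ (-T *ᵥ 1)))) := by
    rw [phaseTypeLaplace, phaseTypeLaplace, ← dotProduct_sub, ← sub_mulVec,
      Matrix.inv_sub_inv (by simp only [isUnit_iff_isUnit_det, hR, hR']),
      sub_sub_sub_cancel_right, ← sub_smul, Matrix.mul_smul, mul_one, Matrix.smul_mul, smul_mulVec,
      dotProduct_smul, smul_eq_mul, ← mulVec_mulVec]
  have hnonneg : 0 ≤ α ⬝ᵥ ((s • 1 - T)⁻¹ *ᵥ ((s' • 1 - T)⁻¹ *ᵥ (-T *ᵥ 1))) :=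
    dotProduct_nonneg_of_nonneg hα0 <| inv_smul_one_sub_mulVec_nonneg hoff hrow hs <|
      inv_smul_one_sub_mulVec_nonneg hoff hrow (Set.mem_Ioi.1 hs') hexit
  linarith [mul_nonneg (sub_nonneg.2 hss') hnonneg]

lemma phaseTypeLaplace_strictAntiOn (hoff : ∀ i j, i ≠ j → 0 ≤ T i j)
    (hrow : ∀ i, ∑ j, T i j ≤ 0) (hT : IsUnit T) (hα0 : 0 ≤ α) (hα1 : ∑ i, α i = 1) :
    StrictAntiOn (phaseTypeLaplace α T) (Set.Ioi 0) := by
  intro s hs s' hs' hss'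
  have hanti := phaseTypeLaplace_antitoneOn hoff hrow hα0
  refine (hanti hs hs' hss'.le).lt_of_ne fun heq => ?_
  -- A rational function that is constant on `[s, s']` is constant wherever it is defined.
  have hconst : ∀ x ∈ Set.Icc s s', IsUnit (x • 1 - T).det ∧
      phaseTypeLaplace α T x = phaseTypeLaplace α T s := by
    intro x ⟨hsx, hxs'⟩
    have hx : x ∈ Set.Ioi 0 := lt_of_lt_of_le hs hsx
    refine ⟨isUnit_det_smul_one_sub hoff hrow hx, le_antisymm (hanti hs hx hsx) ?_⟩
    exact heq ▸ hanti hx hs' hxs'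
  have hzero := dotProduct_inv_smul_one_sub_mulVec_eq_of_infinite T α (-T *ᵥ 1)
    (Set.Icc_infinite hss') hconst (y := 0) (by simpa using (isUnit_iff_isUnit_det _).1 hT.neg)
  have hlt := phaseTypeLaplace_lt_one hoff hrow hα0 hα1 hs
  rw [← phaseTypeLaplace, phaseTypeLaplace_zero hT hα1] at hzero
  linarith

end PhaseType

lemma max_div_lt_add_sqrt_div {c d E : ℝ} (hc : 0 < c) (hE : d ^ 2 < E) :
    max (2 * d / c) 0 < (d + Real.sqrt E) / c := by
  have hd : |d| < Real.sqrt E := Real.lt_sqrt (abs_nonneg d) |>.2 (by rwa [sq_abs])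
  refine max_lt ?_ (div_pos (by linarith [neg_abs_le d]) hc)
  exact div_lt_div_of_pos_right (by linarith [le_abs_self d]) hc

theorem stmt7 (n : ℕ) (σ lam d q : ℝ) (hσ : 0 < σ) (hlam : 0 < lam) (hq : 0 ≤ q)
    (T : Matrix (Fin n) (Fin n) ℝ)
    (hoff : ∀ i j, i ≠ j → 0 ≤ T i j) (hrow : ∀ i, ∑ j, T i j ≤ 0)
    (heig : ∀ μ ∈ spectrum ℂ (T.map (Complex.ofReal : ℝ → ℂ)), μ.re < 0)
    (α : Fin n → ℝ) (hα0 : ∀ i, 0 ≤ α i) (hα1 : ∑ i, α i = 1)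
    (t : Fin n → ℝ) (ht : t = (-T).mulVec 1)
    (b : ℝ → Fin n → ℝ)
    (hb : ∀ a : ℝ, b a = (2 * lam / σ ^ 2) •
      Matrix.vecMul α ((a - 2 * d / σ ^ 2) • (1 : Matrix (Fin n) (Fin n) ℝ) - T)⁻¹)
    (f : ℝ → ℝ)
    (hf : ∀ a : ℝ, f a =
      (d + Real.sqrt (d ^ 2 + σ ^ 2 * (2 * lam + 2 * q - σ ^ 2 * (b a ⬝ᵥ t)))) / σ ^ 2) :
    (∀ a a' : ℝ, 2 * d / σ ^ 2 < a → a < a' → f a < f a') ∧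
    (∀ a : ℝ, 2 * d / σ ^ 2 < a → max (2 * d / σ ^ 2) 0 < f a) := by
  set L := phaseTypeLaplace α T
  have hσ2 : 0 < σ ^ 2 := by positivity
  have hbt : ∀ a, σ ^ 2 * (b a ⬝ᵥ t) = 2 * lam * L (a - 2 * d / σ ^ 2) := by
    intro a
    rw [hb, ht, smul_dotProduct, ← dotProduct_mulVec, smul_eq_mul]
    field_simp
    rfl
  have hrad : ∀ a, 2 * d / σ ^ 2 < a →
      d ^ 2 < d ^ 2 + σ ^ 2 * (2 * lam + 2 * q - σ ^ 2 * (b a ⬝ᵥ t)) := by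
    intro a ha
    have hL := phaseTypeLaplace_lt_one hoff hrow hα0 hα1 (sub_pos.2 ha)
    have hgap := mul_pos hlam (sub_pos.2 hL)
    rw [hbt, lt_add_iff_pos_right]
    exact mul_pos hσ2 (by linarith)
  refine ⟨fun a a' ha haa' => ?_, fun a ha => hf a ▸ max_div_lt_add_sqrt_div hσ2 (hrad a ha)⟩
  have hL : L (a' - 2 * d / σ ^ 2) < L (a - 2 * d / σ ^ 2) :=
    phaseTypeLaplace_strictAntiOn hoff hrow (isUnit_of_forall_mem_spectrum_re_neg heig) hα0 hα1
      (sub_pos.2 ha) (sub_pos.2 (ha.trans haa')) (by linarith)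
  rw [hf, hf]
  gcongr (_ + ?_) / _
  refine Real.sqrt_lt_sqrt ((sq_nonneg d).trans (hrad a ha).le) ?_
  rw [hbt, hbt]
  gcongr
end

section
/- Let a be a fixed point of f(a) = (d + √(d² + σ²(2λ + 2q − 2λ α((a − 2d/σ²)I − T)^{-1} t)))/σ² with a > 2d/σ², and let b = (2λ/σ²) α((a − 2d/σ²)I − T)^{-1}. Then f'(a) = b((a − 2d/σ²)I − T)^{-1} t / (2a − 2d/σ²). Moreover, if b·1 ≤ a and b·1 > 0, then 0 < f'(a) < 1. -/
/-!
Put `s = a - 2d/σ²`, `N = (sI - T)⁻¹` and `v = N t`. Because `T` is a sub-intensity matrix, a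
minimum principle shows that `sI - T` is invertible with `N ≥ 0` entrywise, and
`(sI - T)(1 - v) = s·1 ≥ 0` gives `0 ≤ v ≤ 1`. Differentiating the resolvent,
`d/dx α((x - 2d/σ²)I - T)⁻¹t = -αN²t` at `x = a`, and at the fixed point the square root equals
`σ²a - d > 0`; this gives `f'(a) = λαN²t / (σ²a - d) = b·v / (2a - 2d/σ²)`.
For the bounds, `b ≥ 0` and `v ≤ 1` give `b·v ≤ b·1 ≤ a < 2a - 2d/σ²`, while `b·v > 0` because
`v > 0` entrywise: the zero set of `v` would be a closed class of `T` with vanishing row sums,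
making `T` singular, whereas no eigenvalue of `T` is `0`.
-/

namespace Matrix

theorem dotProduct_pos_of_sum_pos {ι : Type*} [Fintype ι] {b v : ι → ℝ} (hb : 0 ≤ b)
    (hv : ∀ i, 0 < v i) (hsum : 0 < ∑ i, b i) : 0 < b ⬝ᵥ v := by
  obtain ⟨j, -, hj⟩ :=
    Finset.exists_lt_of_sum_lt (by simpa using hsum : ∑ _i : ι, (0 : ℝ) < ∑ i, b i)
  exact Finset.sum_pos' (fun i _ => mul_nonneg (hb i) (hv i).le)
    ⟨j, Finset.mem_univ j, mul_pos hj (hv j)⟩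

theorem det_eq_zero_of_closed_of_rowSum_eq_zero {ι R : Type*} [Fintype ι] [DecidableEq ι]
    [CommRing R] [IsDomain R] {T : Matrix ι ι R} (p : ι → Prop) [DecidablePred p]
    (hp : ∃ i, p i) (hclosed : ∀ i, p i → ∀ j, ¬p j → T i j = 0)
    (hsum : ∀ i, p i → ∑ j, T i j = 0) :
    T.det = 0 := by
  obtain ⟨i₀, hi₀⟩ := hp
  have hblock : toSquareBlockProp T p *ᵥ 1 = 0 := by
    funext i
    have hout : ∑ j : {j // ¬p j}, T i j = 0 :=
      Fintype.sum_eq_zero _ fun j => hclosed i i.2 j j.2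
    rw [Pi.zero_apply, ← hsum i i.2, ← Fintype.sum_subtype_add_sum_subtype p, hout, add_zero]
    simp [toSquareBlockProp, toBlock, mulVec, dotProduct]
  have hone : (1 : {i // p i} → R) ≠ 0 := Function.ne_iff.mpr ⟨⟨i₀, hi₀⟩, one_ne_zero⟩
  rw [twoBlockTriangular_det' T p hclosed, exists_mulVec_eq_zero_iff.mp ⟨1, hone, hblock⟩,
    zero_mul]

theorem det_ne_zero_of_spectrum_re_neg {ι : Type*} [Fintype ι] [DecidableEq ι]
    {T : Matrix ι ι ℝ} (heig : ∀ μ ∈ spectrum ℂ (T.map Complex.ofReal), μ.re < 0) :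
    T.det ≠ 0 := by
  intro hdet
  refine (heig 0 ((spectrum.zero_mem_iff ℂ).mpr fun hT => ?_)).false
  have : (T.map Complex.ofReal).det = 0 := by
    rw [← Complex.ofReal_zero, ← hdet, ← Complex.ofRealHom_eq_coe, RingHom.map_det]
    rfl
  rw [isUnit_iff_isUnit_det, this] at hT
  exact not_isUnit_zero hT

variable {ι : Type*} [Fintype ι] {T : Matrix ι ι ℝ}

theorem mulVec_one_apply (i : ι) : (T *ᵥ 1) i = ∑ j, T i j := by
  simp [mulVec, dotProduct]

structure IsSubIntensity (T : Matrix ι ι ℝ) : Prop where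
  offDiag_nonneg : ∀ i j, i ≠ j → 0 ≤ T i j
  rowSum_nonpos : ∀ i, ∑ j, T i j ≤ 0

theorem IsSubIntensity.neg_mulVec_one_nonneg (hT : T.IsSubIntensity) : 0 ≤ -T *ᵥ 1 := by
  intro i
  rw [neg_mulVec, Pi.neg_apply, mulVec_one_apply, Pi.zero_apply, neg_nonneg]
  exact hT.rowSum_nonpos i

variable [DecidableEq ι]

theorem smul_one_sub_mulVec_apply (s : ℝ) (v : ι → ℝ) (i : ι) :
    ((s • 1 - T) *ᵥ v) i = s * v i - ∑ j, T i j * v j := by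
  rw [sub_mulVec, smul_mulVec, one_mulVec]
  rfl

namespace IsSubIntensity

variable {s : ℝ}

theorem nonneg_of_smul_one_sub_mulVec_nonneg (hT : T.IsSubIntensity) (hs : 0 < s) {v : ι → ℝ}
    (hv : 0 ≤ (s • 1 - T) *ᵥ v) : 0 ≤ v := by
  intro i
  by_contra! hi
  -- at a minimal coordinate `m`, `((sI - T) v) m ≤ (s - ∑ j, T m j) * v m < 0`
  have : Nonempty ι := ⟨i⟩
  obtain ⟨m, hm⟩ := Finite.exists_min v
  have hsum : (∑ j, T m j) * v m ≤ ∑ j, T m j * v j := by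
    rw [Finset.sum_mul]
    refine Finset.sum_le_sum fun j _ => ?_
    rcases eq_or_ne m j with rfl | hmj
    · rfl
    · exact mul_le_mul_of_nonneg_left (hm j) (hT.offDiag_nonneg m j hmj)
  have hvm := hv m
  rw [Pi.zero_apply, smul_one_sub_mulVec_apply] at hvm
  have hneg : (s - ∑ j, T m j) * v m < 0 :=
    mul_neg_of_pos_of_neg (by linarith [hT.rowSum_nonpos m]) ((hm i).trans_lt hi)
  linarith

theorem isUnit_smul_one_sub (hT : T.IsSubIntensity) (hs : 0 < s) : IsUnit (s • 1 - T) := by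
  refine mulVec_injective_iff_isUnit.mp fun v w hvw => le_antisymm ?_ ?_
  · exact sub_nonneg.mp <| hT.nonneg_of_smul_one_sub_mulVec_nonneg hs <| by
      rw [mulVec_sub, hvw, sub_self]
  · exact sub_nonneg.mp <| hT.nonneg_of_smul_one_sub_mulVec_nonneg hs <| by
      rw [mulVec_sub, hvw, sub_self]

theorem smul_one_sub_mulVec_inv_mulVec (hT : T.IsSubIntensity) (hs : 0 < s) (w : ι → ℝ) :
    (s • 1 - T) *ᵥ ((s • 1 - T)⁻¹ *ᵥ w) = w := by
  rw [mulVec_mulVec, mul_nonsing_inv _ ((isUnit_iff_isUnit_det _).mp (hT.isUnit_smul_one_sub hs)),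
    one_mulVec]

theorem inv_smul_one_sub_mulVec_nonneg (hT : T.IsSubIntensity) (hs : 0 < s) {w : ι → ℝ}
    (hw : 0 ≤ w) : 0 ≤ (s • 1 - T)⁻¹ *ᵥ w :=
  hT.nonneg_of_smul_one_sub_mulVec_nonneg hs (by rwa [hT.smul_one_sub_mulVec_inv_mulVec hs])

theorem vecMul_inv_smul_one_sub_nonneg (hT : T.IsSubIntensity) (hs : 0 < s) {u : ι → ℝ}
    (hu : 0 ≤ u) : 0 ≤ vecMul u (s • 1 - T)⁻¹ := by
  intro j
  have hcol := hT.inv_smul_one_sub_mulVec_nonneg hs (Pi.single_nonneg.mpr zero_le_one :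
    0 ≤ Pi.single j (1 : ℝ))
  rw [mulVec_single_one] at hcol
  exact Finset.sum_nonneg fun i _ => mul_nonneg (hu i) (hcol i)

theorem inv_smul_one_sub_mulVec_exit_le_one (hT : T.IsSubIntensity) (hs : 0 < s) :
    (s • 1 - T)⁻¹ *ᵥ (-T *ᵥ 1) ≤ 1 := by
  refine sub_nonneg.mp (hT.nonneg_of_smul_one_sub_mulVec_nonneg hs ?_)
  rw [mulVec_sub, hT.smul_one_sub_mulVec_inv_mulVec hs, sub_mulVec, smul_mulVec, one_mulVec,
    neg_mulVec, sub_neg_eq_add, sub_add_cancel]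
  exact smul_nonneg hs.le zero_le_one

theorem vecMul_inv_smul_one_sub_dotProduct_exit_le_one (hT : T.IsSubIntensity) (hs : 0 < s)
    {α : ι → ℝ} (hα0 : 0 ≤ α) (hα1 : ∑ i, α i = 1) : vecMul α (s • 1 - T)⁻¹ ⬝ᵥ (-T *ᵥ 1) ≤ 1 := by
  rw [← dotProduct_mulVec, ← hα1, ← dotProduct_one]
  exact dotProduct_le_dotProduct_of_nonneg_left (hT.inv_smul_one_sub_mulVec_exit_le_one hs) hα0

theorem inv_smul_one_sub_mulVec_exit_pos (hT : T.IsSubIntensity) (hs : 0 < s) (hdet : T.det ≠ 0)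
    (i : ι) : 0 < ((s • 1 - T)⁻¹ *ᵥ (-T *ᵥ 1)) i := by
  set v := (s • 1 - T)⁻¹ *ᵥ (-T *ᵥ 1)
  have hv : 0 ≤ v := hT.inv_smul_one_sub_mulVec_nonneg hs hT.neg_mulVec_one_nonneg
  have hzero : ∀ k, v k = 0 → ∑ j, T k j = 0 ∧ ∀ j, T k j * v j = 0 := by
    intro k hk
    have hMv : ((s • 1 - T) *ᵥ v) k = (-T *ᵥ 1) k :=
      congrFun (hT.smul_one_sub_mulVec_inv_mulVec hs (-T *ᵥ 1)) k
    rw [smul_one_sub_mulVec_apply, hk, neg_mulVec, Pi.neg_apply, mulVec_one_apply] at hMv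
    have hterm : ∀ j ∈ Finset.univ, 0 ≤ T k j * v j := fun j _ => by
      rcases eq_or_ne k j with rfl | hkj
      · rw [hk, mul_zero]
      · exact mul_nonneg (hT.offDiag_nonneg k j hkj) (hv j)
    have hrow : ∑ j, T k j * v j = 0 :=
      le_antisymm (by linarith [hT.rowSum_nonpos k]) (Finset.sum_nonneg hterm)
    exact ⟨by linarith,
      fun j => (Finset.sum_eq_zero_iff_of_nonneg hterm).mp hrow j (Finset.mem_univ j)⟩
  refine (hv i).lt_of_ne fun hi => hdet ?_
  classical
  exact det_eq_zero_of_closed_of_rowSum_eq_zero (fun k => v k = 0) ⟨i, hi.symm⟩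
    (fun k hk j hj => ((mul_eq_zero.mp ((hzero k hk).2 j)).resolve_right hj))
    (fun k hk => (hzero k hk).1)

end IsSubIntensity

section Resolvent

attribute [local instance] Matrix.linftyOpNormedRing Matrix.linftyOpNormedAlgebra

theorem hasDerivAt_vecMul_inv_smul_one_sub_dotProduct (u w : ι → ℝ) {s : ℝ}
    (hs : IsUnit (s • (1 : Matrix ι ι ℝ) - T)) :
    HasDerivAt (fun r : ℝ => vecMul u (r • (1 : Matrix ι ι ℝ) - T)⁻¹ ⬝ᵥ w)
      (-(vecMul u ((s • (1 : Matrix ι ι ℝ) - T)⁻¹ * (s • 1 - T)⁻¹) ⬝ᵥ w)) s := by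
  have hresolvent : ∀ r : ℝ, resolvent T r = (r • 1 - T)⁻¹ := fun r => by
    rw [resolvent, Algebra.algebraMap_eq_smul_one, nonsing_inv_eq_ringInverse]
  have hres : HasDerivAt (resolvent T) (-resolvent T s ^ 2) s :=
    spectrum.hasDerivAt_resolvent_const_left
      (spectrum.mem_resolventSet_iff.mpr (by rwa [Algebra.algebraMap_eq_smul_one]))
  let L : Matrix ι ι ℝ →ₗ[ℝ] ℝ :=
    { toFun := fun A => vecMul u A ⬝ᵥ w
      map_add' := fun A B => by rw [vecMul_add, add_dotProduct]
      map_smul' := fun c A => by rw [vecMul_smul, smul_dotProduct]; rfl }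
  have hfun : (fun r : ℝ => vecMul u (r • (1 : Matrix ι ι ℝ) - T)⁻¹ ⬝ᵥ w) =
      LinearMap.toContinuousLinearMap L ∘ resolvent T := by
    funext r
    rw [Function.comp_apply, hresolvent]
    rfl
  rw [hfun]
  refine ((LinearMap.toContinuousLinearMap L).hasFDerivAt.comp_hasDerivAt s hres).congr_deriv ?_
  change vecMul u (-(resolvent T s ^ 2)) ⬝ᵥ w = _
  rw [sq, hresolvent, vecMul_neg, neg_dotProduct]

end Resolvent

end Matrix

/-- The larger root `x` of `σ²x²/2 - d x - (λ + q - λφ) = 0`. -/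
noncomputable def quadRoot (σ lam d q φ : ℝ) : ℝ :=
  (d + √(d ^ 2 + σ ^ 2 * (2 * lam + 2 * q - 2 * lam * φ))) / σ ^ 2

theorem sqrt_eq_of_quadRoot_eq {σ lam d q φ a : ℝ} (hσ : σ ≠ 0)
    (hfix : quadRoot σ lam d q φ = a) :
    √(d ^ 2 + σ ^ 2 * (2 * lam + 2 * q - 2 * lam * φ)) = σ ^ 2 * a - d := by
  rw [quadRoot, div_eq_iff (pow_ne_zero 2 hσ)] at hfix
  linarith

theorem lt_mul_of_quadRoot_eq {σ lam d q φ a : ℝ} (hσ : σ ≠ 0) (hlam : 0 ≤ lam) (hq : 0 ≤ q)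
    (hφ : φ ≤ 1) (ha : 2 * d / σ ^ 2 < a) (hfix : quadRoot σ lam d q φ = a) : d < σ ^ 2 * a := by
  have hσ2 : 0 < σ ^ 2 := by positivity
  have hdisc : d ^ 2 ≤ d ^ 2 + σ ^ 2 * (2 * lam + 2 * q - 2 * lam * φ) := by
    have : 0 ≤ 2 * lam + 2 * q - 2 * lam * φ := by nlinarith
    nlinarith
  have habs : |d| ≤ σ ^ 2 * a - d := sqrt_eq_of_quadRoot_eq hσ hfix ▸ Real.abs_le_sqrt hdisc
  rw [div_lt_iff₀ hσ2] at ha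
  linarith [neg_abs_le d]

theorem hasDerivAt_quadRoot_comp {g : ℝ → ℝ} {g' σ lam d q a : ℝ} (hσ : σ ≠ 0)
    (hg : HasDerivAt g g' a) (hfix : quadRoot σ lam d q (g a) = a) (hpos : d < σ ^ 2 * a) :
    HasDerivAt (fun x => quadRoot σ lam d q (g x)) (-(lam * g') / (σ ^ 2 * a - d)) a := by
  have hsqrt := sqrt_eq_of_quadRoot_eq hσ hfix
  have hdisc : d ^ 2 + σ ^ 2 * (2 * lam + 2 * q - 2 * lam * g a) ≠ 0 := fun h => by
    rw [h, Real.sqrt_zero] at hsqrt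
    linarith
  have := ((((((hg.const_mul (2 * lam)).const_sub (2 * lam + 2 * q)).const_mul (σ ^ 2)).const_add
    (d ^ 2)).sqrt hdisc).const_add d).div_const (σ ^ 2)
  refine this.congr_deriv ?_
  rw [hsqrt]
  field_simp

open Matrix

theorem stmt9 (n : ℕ) (σ lam d q : ℝ) (hσ : 0 < σ) (hlam : 0 < lam) (hq : 0 ≤ q)
    (T : Matrix (Fin n) (Fin n) ℝ)
    (hoff : ∀ i j, i ≠ j → 0 ≤ T i j) (hrow : ∀ i, ∑ j, T i j ≤ 0)
    (heig : ∀ μ ∈ spectrum ℂ (T.map (Complex.ofReal : ℝ → ℂ)), μ.re < 0)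
    (α : Fin n → ℝ) (hα0 : ∀ i, 0 ≤ α i) (hα1 : ∑ i, α i = 1)
    (t : Fin n → ℝ) (ht : t = (-T).mulVec 1)
    (f : ℝ → ℝ)
    (hf : ∀ x : ℝ, f x =
      (d + Real.sqrt (d ^ 2 + σ ^ 2 * (2 * lam + 2 * q -
        2 * lam * (Matrix.vecMul α
          ((x - 2 * d / σ ^ 2) • (1 : Matrix (Fin n) (Fin n) ℝ) - T)⁻¹ ⬝ᵥ t)))) / σ ^ 2)
    (a : ℝ) (ha : 2 * d / σ ^ 2 < a) (hfix : f a = a)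
    (b : Fin n → ℝ)
    (hb : b = (2 * lam / σ ^ 2) •
      Matrix.vecMul α ((a - 2 * d / σ ^ 2) • (1 : Matrix (Fin n) (Fin n) ℝ) - T)⁻¹) :
    deriv f a =
      (b ⬝ᵥ (((a - 2 * d / σ ^ 2) • (1 : Matrix (Fin n) (Fin n) ℝ) - T)⁻¹.mulVec t)) /
        (2 * a - 2 * d / σ ^ 2) ∧
    ((∑ i, b i) ≤ a → 0 < ∑ i, b i → 0 < deriv f a ∧ deriv f a < 1) := by
  have hT : T.IsSubIntensity := ⟨hoff, hrow⟩
  have hs : 0 < a - 2 * d / σ ^ 2 := sub_pos.mpr ha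
  have hf_eq : f = fun x => quadRoot σ lam d q
      (vecMul α ((x - 2 * d / σ ^ 2) • (1 : Matrix (Fin n) (Fin n) ℝ) - T)⁻¹ ⬝ᵥ t) := funext hf
  subst ht hb
  rw [hf_eq] at hfix
  have hpos : d < σ ^ 2 * a := lt_mul_of_quadRoot_eq hσ.ne' hlam.le hq
    (hT.vecMul_inv_smul_one_sub_dotProduct_exit_le_one hs hα0 hα1) ha hfix
  have hderiv := hasDerivAt_quadRoot_comp hσ.ne' ((hasDerivAt_vecMul_inv_smul_one_sub_dotProduct
    α (-T *ᵥ 1) (hT.isUnit_smul_one_sub hs)).comp_sub_const a (2 * d / σ ^ 2)) hfix hpos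
  rw [← hf_eq] at hderiv
  set N := ((a - 2 * d / σ ^ 2) • (1 : Matrix (Fin n) (Fin n) ℝ) - T)⁻¹
  have hformula : deriv f a = ((2 * lam / σ ^ 2) • vecMul α N) ⬝ᵥ (N *ᵥ (-T *ᵥ 1)) /
      (2 * a - 2 * d / σ ^ 2) := by
    rw [hderiv.deriv, smul_dotProduct, dotProduct_mulVec (vecMul α N), vecMul_vecMul, smul_eq_mul]
    generalize vecMul α (N * N) ⬝ᵥ (-T *ᵥ 1) = X
    field_simp
  refine ⟨hformula, fun hle hsum => ?_⟩
  have hb0 : 0 ≤ (2 * lam / σ ^ 2) • vecMul α N :=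
    smul_nonneg (by positivity) (hT.vecMul_inv_smul_one_sub_nonneg hs hα0)
  have hbv_pos := dotProduct_pos_of_sum_pos hb0
    (hT.inv_smul_one_sub_mulVec_exit_pos hs (det_ne_zero_of_spectrum_re_neg heig)) hsum
  have hbv_le :=
    dotProduct_le_dotProduct_of_nonneg_left (hT.inv_smul_one_sub_mulVec_exit_le_one hs) hb0
  rw [dotProduct_one] at hbv_le
  rw [hformula]
  exact ⟨div_pos hbv_pos (by linarith), (div_lt_one (by linarith)).mpr (by linarith)⟩
end

section
/- Let d, λ > 0, q > 0 and (α, T) phase-type with t = −T1. If π ≥ 0 solves π((λ + q − d π t)I − dT) = λα with 0 ≤ d π t < λ, then π·1 < 1. -/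
/-! Multiplying the equation on the right by the all-ones vector and using `T 1 = -t`, `α 1 = 1`
gives `(λ - d π t) (1 - π 1) = q (π 1)`. The left factor `λ - d π t` and `q` are positive, so
`π 1 ≥ 1` would make the left side nonpositive and the right side positive. -/

open Matrix

theorem vecMul_smul_one_sub_smul_dotProduct_one {ι R : Type*} [Fintype ι] [DecidableEq ι]
    [CommRing R] (π : ι → R) (c d : R) (T : Matrix ι ι R) :
    π ᵥ* (c • (1 : Matrix ι ι R) - d • T) ⬝ᵥ 1 = c * ∑ i, π i + d * (π ⬝ᵥ (-T) *ᵥ 1) := by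
  rw [← dotProduct_mulVec, sub_mulVec, smul_mulVec, smul_mulVec, one_mulVec, neg_mulVec]
  simp only [dotProduct_sub, dotProduct_smul, dotProduct_neg, dotProduct_one, smul_eq_mul]
  ring

theorem sub_mul_one_sub_sum_eq_mul_sum {ι R : Type*} [Fintype ι] [DecidableEq ι] [CommRing R]
    (d lam q : R) (T : Matrix ι ι R) (α π : ι → R) (hα1 : ∑ i, α i = 1)
    (heq : π ᵥ* ((lam + q - d * (π ⬝ᵥ (-T) *ᵥ 1)) • (1 : Matrix ι ι R) - d • T) = lam • α) :
    (lam - d * (π ⬝ᵥ (-T) *ᵥ 1)) * (1 - ∑ i, π i) = q * ∑ i, π i := by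
  have h := congrArg (· ⬝ᵥ (1 : ι → R)) heq
  rw [vecMul_smul_one_sub_smul_dotProduct_one, smul_dotProduct, dotProduct_one, hα1,
    smul_eq_mul, mul_one] at h
  linear_combination -h

theorem lt_one_of_mul_one_sub_eq_mul {R : Type*} [CommRing R] [LinearOrder R]
    [IsStrictOrderedRing R] {a q s : R} (ha : 0 < a) (hq : 0 < q)
    (h : a * (1 - s) = q * s) : s < 1 := by
  by_contra! hs
  nlinarith

theorem stmt11_general (n : ℕ) (d lam q : ℝ) (hq : 0 < q)
    (T : Matrix (Fin n) (Fin n) ℝ)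
    (α : Fin n → ℝ) (hα1 : ∑ i, α i = 1)
    (t : Fin n → ℝ) (ht : t = (-T).mulVec 1)
    (π : Fin n → ℝ)
    (hπt : d * (π ⬝ᵥ t) < lam)
    (heq : Matrix.vecMul π
      ((lam + q - d * (π ⬝ᵥ t)) • (1 : Matrix (Fin n) (Fin n) ℝ) - d • T) = lam • α) :
    ∑ i, π i < 1 := by
  subst ht
  exact lt_one_of_mul_one_sub_eq_mul (sub_pos.mpr hπt) hq
    (sub_mul_one_sub_sum_eq_mul_sum d lam q T α π hα1 heq)

theorem stmt11 (n : ℕ) (d lam q : ℝ) (hd : 0 < d) (hlam : 0 < lam) (hq : 0 < q)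
    (T : Matrix (Fin n) (Fin n) ℝ)
    (α : Fin n → ℝ) (hα0 : ∀ i, 0 ≤ α i) (hα1 : ∑ i, α i = 1)
    (t : Fin n → ℝ) (ht : t = (-T).mulVec 1)
    (π : Fin n → ℝ) (hπ0 : ∀ i, 0 ≤ π i)
    (hπt0 : 0 ≤ d * (π ⬝ᵥ t)) (hπt : d * (π ⬝ᵥ t) < lam)
    (heq : Matrix.vecMul π
      ((lam + q - d * (π ⬝ᵥ t)) • (1 : Matrix (Fin n) (Fin n) ℝ) - d • T) = lam • α) :
    ∑ i, π i < 1 :=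
  stmt11_general n d lam q hq T α hα1 t ht π hπt heq
end

section
/- Define the iteration π_n = λ α((λ + q − d π_{n-1} t)I − d T)^{-1} for d, λ > 0, q ≥ 0 and phase-type (α, T) with t = −T1. If 0 ≤ π_{n-1} t < λ/d then the inverse exists, π_n > 0 entrywise (assuming irreducibility so that α((sI−T)^{-1}) has positive entries for s > 0), and 0 < π_n t < λ/d. -/
/-!
With `s = λ + q - d (π t) > 0` the matrix is `d • ((s/d) I - T)`, invertible because the stable
matrix `T` has no eigenvalue at `s/d ≥ 0`. So `π_n = (λ/d) β` with `β = α ((s/d) I - T)⁻¹ > 0`.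
Pairing `β T = (s/d) β - α` with `1` gives `β t = 1 - (s/d) (β 1)`, which is `< 1` as `β 1 > 0`,
and `> 0` because `t = -T 1` is nonnegative and nonzero (`T` is invertible).
-/

open Matrix

variable {ι : Type*} [Fintype ι] [DecidableEq ι]

namespace Matrix

theorem isUnit_map_iff_of_field {K L : Type*} [Field K] [Field L] (f : K →+* L)
    (A : Matrix ι ι K) : IsUnit (A.map f) ↔ IsUnit A := by
  rw [isUnit_iff_isUnit_det, isUnit_iff_isUnit_det, ← RingHom.mapMatrix_apply, ← RingHom.map_det,
    isUnit_iff_ne_zero, isUnit_iff_ne_zero, map_ne_zero]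

theorem ofReal_mem_spectrum_map {A : Matrix ι ι ℝ} {r : ℝ} (h : r ∈ spectrum ℝ A) :
    (r : ℂ) ∈ spectrum ℂ (A.map Complex.ofReal) := by
  rw [spectrum.mem_iff] at h ⊢
  have hmap : algebraMap ℂ (Matrix ι ι ℂ) r - A.map Complex.ofReal
      = (algebraMap ℝ (Matrix ι ι ℝ) r - A).map Complex.ofRealHom := by
    ext i j
    by_cases hij : i = j <;> simp [algebraMap_matrix_apply, hij]
  rwa [hmap, isUnit_map_iff_of_field]

end Matrix

theorem isUnit_smul_one_sub_of_re_spectrum_neg {T : Matrix ι ι ℝ}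
    (heig : ∀ μ ∈ spectrum ℂ (T.map Complex.ofReal), μ.re < 0) {s : ℝ} (hs : 0 ≤ s) :
    IsUnit (s • 1 - T) := by
  have hs_notMem : s ∉ spectrum ℝ T := fun h => by
    simpa using (heig _ (ofReal_mem_spectrum_map h)).trans_le hs
  simpa [spectrum.mem_iff, Algebra.algebraMap_eq_smul_one] using hs_notMem

theorem isUnit_of_re_spectrum_neg {T : Matrix ι ι ℝ}
    (heig : ∀ μ ∈ spectrum ℂ (T.map Complex.ofReal), μ.re < 0) : IsUnit T := by
  simpa using (isUnit_smul_one_sub_of_re_spectrum_neg heig le_rfl).neg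

theorem resolvent_dotProduct_neg_mulVec_one {R : Type*} [CommRing R] {T : Matrix ι ι R} {s : R}
    (h : IsUnit (s • 1 - T)) (α : ι → R) :
    (α ᵥ* (s • 1 - T)⁻¹) ⬝ᵥ (-T *ᵥ 1) = α ⬝ᵥ 1 - s * ((α ᵥ* (s • 1 - T)⁻¹) ⬝ᵥ 1) := by
  set β := α ᵥ* (s • 1 - T)⁻¹
  have hβT : β ᵥ* (-T) = α - s • β := by
    rw [show -T = (s • 1 - T) - s • 1 by abel, vecMul_sub, vecMul_smul, vecMul_one, vecMul_vecMul,
      nonsing_inv_mul _ ((isUnit_iff_isUnit_det _).mp h), vecMul_one]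
  rw [dotProduct_mulVec, hβT, sub_dotProduct, smul_dotProduct, smul_eq_mul]

theorem resolvent_exit_mem_Ioo {T : Matrix ι ι ℝ} (hrow : ∀ i, ∑ j, T i j ≤ 0)
    (heig : ∀ μ ∈ spectrum ℂ (T.map Complex.ofReal), μ.re < 0)
    {α : ι → ℝ} (hα1 : ∑ i, α i = 1) {s : ℝ} (hs : 0 < s)
    (hβ : ∀ i, 0 < (α ᵥ* (s • 1 - T)⁻¹) i) :
    (α ᵥ* (s • 1 - T)⁻¹) ⬝ᵥ (-T *ᵥ 1) ∈ Set.Ioo 0 1 := by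
  set β := α ᵥ* (s • 1 - T)⁻¹
  have hι : Nonempty ι := by
    by_contra h
    simp [not_nonempty_iff.mp h] at hα1
  have ht0 : ∀ i, 0 ≤ (-T *ᵥ 1) i := fun i => by
    simpa [mulVec, dotProduct] using hrow i
  have ht : -T *ᵥ 1 ≠ 0 := by
    have hinj := mulVec_injective_iff_isUnit.mpr (isUnit_of_re_spectrum_neg heig).neg
    rw [← mulVec_zero (-T), Ne, hinj.eq_iff]
    exact one_ne_zero
  obtain ⟨i, hi⟩ := Function.ne_iff.mp ht
  refine ⟨Finset.sum_pos' (fun j _ => mul_nonneg (hβ j).le (ht0 j))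
    ⟨i, Finset.mem_univ i, mul_pos (hβ i) ((ht0 i).lt_of_ne' hi)⟩, ?_⟩
  have hβ1 : 0 < β ⬝ᵥ 1 := by
    simpa [dotProduct] using Finset.sum_pos (fun j _ => hβ j) Finset.univ_nonempty
  have hα : α ⬝ᵥ 1 = 1 := by simpa [dotProduct] using hα1
  rw [resolvent_dotProduct_neg_mulVec_one (isUnit_smul_one_sub_of_re_spectrum_neg heig hs.le), hα]
  nlinarith

theorem stmt13_general (n : ℕ) (d lam q : ℝ) (hd : 0 < d) (hlam : 0 < lam) (hq : 0 ≤ q)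
    (T : Matrix (Fin n) (Fin n) ℝ)
    (hrow : ∀ i, ∑ j, T i j ≤ 0)
    (heig : ∀ μ ∈ spectrum ℂ (T.map (Complex.ofReal : ℝ → ℂ)), μ.re < 0)
    (α : Fin n → ℝ) (hα1 : ∑ i, α i = 1)
    (t : Fin n → ℝ) (ht : t = (-T).mulVec 1)
    (hirr : ∀ s : ℝ, 0 < s → ∀ i,
      0 < Matrix.vecMul α ((s • (1 : Matrix (Fin n) (Fin n) ℝ) - T)⁻¹) i)
    (πp : Fin n → ℝ) (hπp : πp ⬝ᵥ t < lam / d)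
    (πn : Fin n → ℝ)
    (hπn : πn = lam • Matrix.vecMul α
      ((lam + q - d * (πp ⬝ᵥ t)) • (1 : Matrix (Fin n) (Fin n) ℝ) - d • T)⁻¹) :
    IsUnit ((lam + q - d * (πp ⬝ᵥ t)) • (1 : Matrix (Fin n) (Fin n) ℝ) - d • T) ∧
    (∀ i, 0 < πn i) ∧ 0 < πn ⬝ᵥ t ∧ πn ⬝ᵥ t < lam / d := by
  set s := lam + q - d * (πp ⬝ᵥ t)
  have hs : 0 < s / d := div_pos (by linarith [(lt_div_iff₀' hd).mp hπp]) hd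
  have hM : s • (1 : Matrix (Fin n) (Fin n) ℝ) - d • T = d • ((s / d) • 1 - T) := by
    rw [smul_sub, smul_smul, mul_div_cancel₀ s hd.ne']
  have hU := isUnit_smul_one_sub_of_re_spectrum_neg heig hs.le
  have := invertibleOfNonzero hd.ne'
  have hπβ : πn = (lam / d) • (α ᵥ* ((s / d) • 1 - T)⁻¹) := by
    rw [hπn, hM, Matrix.inv_smul _ _ ((isUnit_iff_isUnit_det _).mp hU), invOf_eq_inv,
      vecMul_smul, smul_smul, ← div_eq_mul_inv]
  obtain ⟨hexit_pos, hexit_lt_one⟩ := resolvent_exit_mem_Ioo hrow heig hα1 hs (hirr _ hs)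
  have hld : 0 < lam / d := div_pos hlam hd
  rw [← ht] at hexit_pos hexit_lt_one
  rw [hπβ, smul_dotProduct, smul_eq_mul]
  refine ⟨hM ▸ hU.smul (Units.mk0 d hd.ne'), fun i => mul_pos hld (hirr _ hs i),
    mul_pos hld hexit_pos, ?_⟩
  simpa using mul_lt_mul_of_pos_left hexit_lt_one hld

theorem stmt13 (n : ℕ) (d lam q : ℝ) (hd : 0 < d) (hlam : 0 < lam) (hq : 0 ≤ q)
    (T : Matrix (Fin n) (Fin n) ℝ)
    (hoff : ∀ i j, i ≠ j → 0 ≤ T i j) (hrow : ∀ i, ∑ j, T i j ≤ 0)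
    (heig : ∀ μ ∈ spectrum ℂ (T.map (Complex.ofReal : ℝ → ℂ)), μ.re < 0)
    (α : Fin n → ℝ) (hα0 : ∀ i, 0 ≤ α i) (hα1 : ∑ i, α i = 1)
    (t : Fin n → ℝ) (ht : t = (-T).mulVec 1)
    (hirr : ∀ s : ℝ, 0 < s → ∀ i,
      0 < Matrix.vecMul α ((s • (1 : Matrix (Fin n) (Fin n) ℝ) - T)⁻¹) i)
    (πp : Fin n → ℝ) (hπp0 : 0 ≤ πp ⬝ᵥ t) (hπp : πp ⬝ᵥ t < lam / d)
    (πn : Fin n → ℝ)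
    (hπn : πn = lam • Matrix.vecMul α
      ((lam + q - d * (πp ⬝ᵥ t)) • (1 : Matrix (Fin n) (Fin n) ℝ) - d • T)⁻¹) :
    IsUnit ((lam + q - d * (πp ⬝ᵥ t)) • (1 : Matrix (Fin n) (Fin n) ℝ) - d • T) ∧
    (∀ i, 0 < πn i) ∧ 0 < πn ⬝ᵥ t ∧ πn ⬝ᵥ t < lam / d :=
  stmt13_general n d lam q hd hlam hq T hrow heig α hα1 t ht hirr πp hπp πn hπn
end

section
/- With the iteration π_n = λα((λ + q − d π_{n-1} t)I − dT)^{-1}: if π_{n-1} t > π_{n-2} t then π_n ≥ π_{n-1} entrywise, and if π_{n-1} t < π_{n-2} t then π_n ≤ π_{n-1} entrywise. Consequently the sequence (π_n)_{n≥1} is monotone (entrywise) and converges to a limit π* solving π*((λ + q − d π* t)I − dT) = λα. -/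
/-!
The resolvent `R x = (x • 1 - d • T)⁻¹` of the Metzler matrix `d • T` is entrywise
nonnegative for `x ≥ 0` (a minimum principle for `x > 0`, then continuity at `x = 0`, where
`R 0` exists because the spectrum of `T` lies in the open left half-plane), and the resolvent
identity `R x - R y = (y - x) • R x * R y` makes it entrywise antitone there. Hence
`Φ s = lam • α ᵥ* R (lam + q - d * s)` is monotone in `s`, and since `t ≥ 0` the recursion
`π (m + 1) = Φ (π m ⬝ᵥ t)` carries the order of two iterates to their successors. The sequence
is therefore monotone, bounded by `Φ 0` and `Φ ((lam + q) / d)`, and converges; continuity of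
`Φ` makes the limit a fixed point, which is the stated equation after multiplying by `R⁻¹`.
-/

open Matrix

open Filter Topology

open Set

namespace Matrix

theorem vecMul_mono_right {ι κ : Type*} [Fintype ι] {v : ι → ℝ} (hv : 0 ≤ v)
    {M N : Matrix ι κ ℝ} (hMN : ∀ i j, M i j ≤ N i j) : v ᵥ* M ≤ v ᵥ* N := fun j =>
  Finset.sum_le_sum fun i _ => mul_le_mul_of_nonneg_left (hMN i j) (hv i)

variable {ι : Type*} [Fintype ι] [DecidableEq ι] {A : Matrix ι ι ℝ} {x y : ℝ}

theorem nonneg_of_nonneg_smul_one_sub_mulVec (hA : ∀ i j, i ≠ j → 0 ≤ A i j)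
    (hrow : ∀ i, ∑ j, A i j < x) {v : ι → ℝ} (hv : 0 ≤ (x • 1 - A) *ᵥ v) : 0 ≤ v := by
  intro k
  by_contra! hk
  change v k < 0 at hk
  have : Nonempty ι := ⟨k⟩
  -- At a coordinate `i` where `v` is minimal, `((x • 1 - A) *ᵥ v) i ≤ (x - ∑ j, A i j) * v i`,
  -- which is negative if `v i` is.
  obtain ⟨i, hi⟩ := Finite.exists_min v
  have hvi : v i < 0 := (hi k).trans_lt hk
  have hAv : (∑ j, A i j) * v i ≤ ∑ j, A i j * v j := by
    rw [Finset.sum_mul]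
    refine Finset.sum_le_sum fun j _ => ?_
    rcases eq_or_ne i j with rfl | hij
    · rfl
    · exact mul_le_mul_of_nonneg_left (hi j) (hA i j hij)
  have hMv : ((x • 1 - A) *ᵥ v) i = x * v i - ∑ j, A i j * v j := by
    rw [sub_mulVec, smul_mulVec, one_mulVec]
    simp [mulVec, dotProduct]
  nlinarith [show 0 ≤ ((x • 1 - A) *ᵥ v) i from hv i,
    mul_neg_of_pos_of_neg (sub_pos.2 (hrow i)) hvi]

theorem isUnit_det_smul_one_sub_of_rowSum_lt (hA : ∀ i j, i ≠ j → 0 ≤ A i j)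
    (hrow : ∀ i, ∑ j, A i j < x) : IsUnit (x • 1 - A).det := by
  rw [← isUnit_iff_isUnit_det, ← mulVec_injective_iff_isUnit]
  have hle : ∀ u u' : ι → ℝ, (x • 1 - A) *ᵥ u = (x • 1 - A) *ᵥ u' → u' ≤ u := fun u u' h =>
    sub_nonneg.1 <|
      nonneg_of_nonneg_smul_one_sub_mulVec hA hrow (by rw [mulVec_sub, h, sub_self])
  exact fun v w hvw => le_antisymm (hle w v hvw.symm) (hle v w hvw)

theorem inv_smul_one_sub_apply_nonneg_of_rowSum_lt (hA : ∀ i j, i ≠ j → 0 ≤ A i j)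
    (hrow : ∀ i, ∑ j, A i j < x) (i j : ι) : 0 ≤ (x • 1 - A)⁻¹ i j := by
  have hcol : 0 ≤ (x • 1 - A)⁻¹ *ᵥ Pi.single j 1 := by
    refine nonneg_of_nonneg_smul_one_sub_mulVec hA hrow ?_
    rw [mulVec_mulVec, mul_nonsing_inv _ (isUnit_det_smul_one_sub_of_rowSum_lt hA hrow),
      one_mulVec]
    exact Pi.single_nonneg.2 zero_le_one
  simpa [mulVec_single_one] using hcol i

theorem continuousAt_inv_smul_one_sub (A : Matrix ι ι ℝ) (hx : IsUnit (x • 1 - A).det) :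
    ContinuousAt (fun y : ℝ => (y • 1 - A)⁻¹) x :=
  (continuousAt_matrix_inv _ (NormedRing.inverse_continuousAt hx.unit)).comp (g := Inv.inv)
    (f := fun y : ℝ => y • (1 : Matrix ι ι ℝ) - A) (by fun_prop)

theorem inv_smul_one_sub_apply_nonneg (hA : ∀ i j, i ≠ j → 0 ≤ A i j)
    (hrow : ∀ i, ∑ j, A i j ≤ x) (hx : IsUnit (x • 1 - A).det) (i j : ι) :
    0 ≤ (x • 1 - A)⁻¹ i j := by
  have hlim := (continuousAt_inv_smul_one_sub A hx).tendsto.mono_left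
    (nhdsWithin_le_nhds (s := Ioi x))
  refine ge_of_tendsto (tendsto_pi_nhds.1 (tendsto_pi_nhds.1 hlim i) j) ?_
  exact eventually_nhdsWithin_of_forall fun y hy =>
    inv_smul_one_sub_apply_nonneg_of_rowSum_lt hA (fun i => (hrow i).trans_lt hy) i j

theorem inv_smul_one_sub_apply_anti (hA : ∀ i j, i ≠ j → 0 ≤ A i j)
    (hrow : ∀ i, ∑ j, A i j ≤ x) (hx : IsUnit (x • 1 - A).det) (hy : IsUnit (y • 1 - A).det)
    (hxy : x ≤ y) (i j : ι) : (y • 1 - A)⁻¹ i j ≤ (x • 1 - A)⁻¹ i j := by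
  have hres : (x • 1 - A)⁻¹ - (y • 1 - A)⁻¹ = (y - x) • ((x • 1 - A)⁻¹ * (y • 1 - A)⁻¹) := by
    rw [inv_sub_inv (iff_of_true ((isUnit_iff_isUnit_det _).2 hx)
        ((isUnit_iff_isUnit_det _).2 hy)), sub_sub_sub_cancel_right, ← sub_smul,
      Matrix.mul_smul, Matrix.mul_one, Matrix.smul_mul]
  have hprod : 0 ≤ ((x • 1 - A)⁻¹ * (y • 1 - A)⁻¹) i j :=
    Finset.sum_nonneg fun k _ => mul_nonneg (inv_smul_one_sub_apply_nonneg hA hrow hx i k)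
      (inv_smul_one_sub_apply_nonneg hA (fun i => (hrow i).trans hxy) hy k j)
  have := congrFun (congrFun hres i) j
  simp only [sub_apply, smul_apply, smul_eq_mul] at this
  nlinarith

theorem antitoneOn_vecMul_inv_smul_one_sub (hA : ∀ i j, i ≠ j → 0 ≤ A i j)
    (hrow : ∀ i, ∑ j, A i j ≤ 0) (hunit : ∀ x : ℝ, 0 ≤ x → IsUnit (x • 1 - A).det)
    {v : ι → ℝ} (hv : 0 ≤ v) : AntitoneOn (fun x : ℝ => v ᵥ* (x • 1 - A)⁻¹) (Ici 0) :=
  fun x hx _ hy hxy => vecMul_mono_right hv <|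
    inv_smul_one_sub_apply_anti hA (fun i => (hrow i).trans hx) (hunit x hx) (hunit _ hy) hxy

theorem mem_spectrum_map_ofReal {T : Matrix ι ι ℝ} (hx : x ∈ spectrum ℝ T) :
    (x : ℂ) ∈ spectrum ℂ (T.map Complex.ofReal) := by
  rw [spectrum.mem_iff, isUnit_iff_isUnit_det, isUnit_iff_ne_zero, not_not] at hx ⊢
  have hmap : algebraMap ℂ _ (x : ℂ) - T.map Complex.ofReal =
      Complex.ofRealHom.mapMatrix (algebraMap ℝ _ x - T) := by
    ext i j
    simp [algebraMap_eq_diagonal, diagonal_apply, apply_ite]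
  rw [hmap, ← RingHom.map_det, hx, map_zero]

theorem isUnit_det_smul_one_sub_smul {T : Matrix ι ι ℝ} {d : ℝ} (hd : 0 < d) (hx : 0 ≤ x)
    (hT : ∀ μ ∈ spectrum ℂ (T.map Complex.ofReal), μ.re < 0) :
    IsUnit (x • 1 - d • T).det := by
  have hxd : x / d ∉ spectrum ℝ T := fun h =>
    (hT _ (mem_spectrum_map_ofReal h)).not_ge (by simpa using div_nonneg hx hd.le)
  rw [spectrum.notMem_iff, isUnit_iff_isUnit_det] at hxd
  have hfac : x • 1 - d • T = d • (algebraMap ℝ _ (x / d) - T) := by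
    rw [Algebra.algebraMap_eq_smul_one, smul_sub, smul_smul, mul_div_cancel₀ _ hd.ne']
  rw [hfac, det_smul]
  exact (hd.ne'.isUnit.pow _).mul hxd

end Matrix

section Feedback

variable {ι : Type*} [Fintype ι] {Φ : ℝ → ι → ℝ} {a b : ℝ} {t : ι → ℝ} {v : ℕ → ι → ℝ}

theorem succ_le_succ_of_dotProduct_le (hΦ : MonotoneOn Φ (Icc a b))
    (hv : ∀ m, v (m + 1) = Φ (v m ⬝ᵥ t)) (hvS : ∀ m, v m ⬝ᵥ t ∈ Icc a b) {m k : ℕ}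
    (h : v m ⬝ᵥ t ≤ v k ⬝ᵥ t) : v (m + 1) ≤ v (k + 1) := by
  rw [hv m, hv k]
  exact hΦ (hvS m) (hvS k) h

theorem monotone_or_antitone_of_feedback {P : Type*} [Preorder P] {u : ℕ → P} {g : P → ℝ}
    (hg : Monotone g) (hu : ∀ m k, g (u m) ≤ g (u k) → u (m + 1) ≤ u (k + 1)) :
    Monotone (fun m => u (m + 1)) ∨ Antitone (fun m => u (m + 1)) := by
  rcases le_total (g (u 0)) (g (u 1)) with h | h
  · refine .inl (monotone_nat_of_le_succ fun m => ?_)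
    induction m with
    | zero => exact hu 0 1 h
    | succ m ih => exact hu _ _ (hg ih)
  · refine .inr (antitone_nat_of_succ_le fun m => ?_)
    induction m with
    | zero => exact hu 1 0 h
    | succ m ih => exact hu _ _ (hg ih)

theorem exists_tendsto_of_monotone_or_antitone {α : Type*} [ConditionallyCompleteLattice α]
    [TopologicalSpace α] [SupConvergenceClass α] [InfConvergenceClass α] {f : ℕ → α}
    (hf : Monotone f ∨ Antitone f) {lo hi : α} (hlo : ∀ m, lo ≤ f m) (hhi : ∀ m, f m ≤ hi) :
    ∃ L, Tendsto f atTop (𝓝 L) := by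
  rcases hf with hf | hf
  · exact ⟨_, tendsto_atTop_ciSup hf ⟨hi, forall_mem_range.2 hhi⟩⟩
  · exact ⟨_, tendsto_atTop_ciInf hf ⟨lo, forall_mem_range.2 hlo⟩⟩

theorem exists_tendsto_fixedPoint_of_feedback (ht : 0 ≤ t) (hΦ : MonotoneOn Φ (Icc a b))
    (hΦc : ∀ s ∈ Icc a b, ContinuousAt Φ s) (hv : ∀ m, v (m + 1) = Φ (v m ⬝ᵥ t))
    (hvS : ∀ m, v m ⬝ᵥ t ∈ Icc a b) :
    ∃ L, Tendsto v atTop (𝓝 L) ∧ L ⬝ᵥ t ∈ Icc a b ∧ Φ (L ⬝ᵥ t) = L := by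
  have hab : a ∈ Icc a b ∧ b ∈ Icc a b :=
    ⟨left_mem_Icc.2 ((hvS 0).1.trans (hvS 0).2), right_mem_Icc.2 ((hvS 0).1.trans (hvS 0).2)⟩
  obtain ⟨L, hL⟩ := exists_tendsto_of_monotone_or_antitone (f := fun m => v (m + 1))
    (monotone_or_antitone_of_feedback
      (fun _ _ h => dotProduct_le_dotProduct_of_nonneg_right h ht)
      fun _ _ => succ_le_succ_of_dotProduct_le hΦ hv hvS)
    (fun m => (hΦ hab.1 (hvS m) (hvS m).1).trans_eq (hv m).symm)
    (fun m => (hv m).trans_le (hΦ (hvS m) hab.2 (hvS m).2))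
  have hLt : Tendsto (fun m => v m ⬝ᵥ t) atTop (𝓝 (L ⬝ᵥ t)) :=
    (tendsto_add_atTop_iff_nat 1).1
      (((continuous_id.dotProduct continuous_const).tendsto L).comp hL)
  have hLS : L ⬝ᵥ t ∈ Icc a b := isClosed_Icc.mem_of_tendsto hLt (Eventually.of_forall hvS)
  refine ⟨L, (tendsto_add_atTop_iff_nat 1).1 hL, hLS, tendsto_nhds_unique ?_ hL⟩
  simp only [hv]
  exact (hΦc _ hLS).tendsto.comp hLt

end Feedback

theorem stmt14_general (n : ℕ) (d lam q : ℝ) (hd : 0 < d) (hlam : 0 < lam) (hq : 0 ≤ q)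
    (T : Matrix (Fin n) (Fin n) ℝ)
    (hoff : ∀ i j, i ≠ j → 0 ≤ T i j) (hrow : ∀ i, ∑ j, T i j ≤ 0)
    (heig : ∀ μ ∈ spectrum ℂ (T.map (Complex.ofReal : ℝ → ℂ)), μ.re < 0)
    (α : Fin n → ℝ) (hα0 : ∀ i, 0 ≤ α i)
    (t : Fin n → ℝ) (ht : t = (-T).mulVec 1)
    (π : ℕ → Fin n → ℝ)
    (hrec : ∀ m : ℕ, π (m + 1) = lam • Matrix.vecMul α
      ((lam + q - d * (π m ⬝ᵥ t)) • (1 : Matrix (Fin n) (Fin n) ℝ) - d • T)⁻¹)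
    (hbd : ∀ m : ℕ, 0 ≤ π m ⬝ᵥ t ∧ π m ⬝ᵥ t < lam / d) :
    (∀ m : ℕ, π (m + 1) ⬝ᵥ t > π m ⬝ᵥ t → ∀ i, π (m + 1) i ≤ π (m + 2) i) ∧
    (∀ m : ℕ, π (m + 1) ⬝ᵥ t < π m ⬝ᵥ t → ∀ i, π (m + 2) i ≤ π (m + 1) i) ∧
    ((∀ i, Monotone (fun m : ℕ => π (m + 1) i)) ∨
      (∀ i, Antitone (fun m : ℕ => π (m + 1) i))) ∧
    ∃ πs : Fin n → ℝ, Tendsto π atTop (𝓝 πs) ∧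
      Matrix.vecMul πs
        ((lam + q - d * (πs ⬝ᵥ t)) • (1 : Matrix (Fin n) (Fin n) ℝ) - d • T) = lam • α := by
  have hunit : ∀ x : ℝ, 0 ≤ x → IsUnit (x • 1 - d • T).det := fun x hx =>
    isUnit_det_smul_one_sub_smul hd hx heig
  have hanti := antitoneOn_vecMul_inv_smul_one_sub
    (fun i j hij => mul_nonneg hd.le (hoff i j hij))
    (fun i => by simpa [← Finset.mul_sum] using mul_nonpos_of_nonneg_of_nonpos hd.le (hrow i))
    hunit hα0
  have ht0 : 0 ≤ t := fun i => by simpa [ht, neg_mulVec, mulVec, dotProduct] using hrow i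
  set Φ : ℝ → Fin n → ℝ := fun s => lam • α ᵥ* ((lam + q - d * s) • 1 - d • T)⁻¹
  set S := Icc 0 ((lam + q) / d)
  have hx : ∀ s ∈ S, 0 ≤ lam + q - d * s := fun s hs =>
    sub_nonneg.2 ((le_div_iff₀' hd).1 hs.2)
  have hΦ : MonotoneOn Φ S := fun s hs s' hs' hss' =>
    smul_le_smul_of_nonneg_left (hanti (hx s' hs') (hx s hs) (by nlinarith)) hlam.le
  have hΦc : ∀ s ∈ S, ContinuousAt Φ s := fun s hs =>
    (by fun_prop : Continuous fun M : Matrix (Fin n) (Fin n) ℝ => lam • α ᵥ* M).continuousAt.comp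
      ((continuousAt_inv_smul_one_sub _ (hunit _ (hx s hs))).comp
        (f := fun s => lam + q - d * s) (by fun_prop))
  have hπS : ∀ m, π m ⬝ᵥ t ∈ S := fun m =>
    ⟨(hbd m).1, (hbd m).2.le.trans (div_le_div_of_nonneg_right (by linarith) hd.le)⟩
  have hstep : ∀ m k, π m ⬝ᵥ t ≤ π k ⬝ᵥ t → π (m + 1) ≤ π (k + 1) := fun _ _ =>
    succ_le_succ_of_dotProduct_le hΦ hrec hπS
  obtain ⟨L, hL, hLS, hfix⟩ := exists_tendsto_fixedPoint_of_feedback ht0 hΦ hΦc hrec hπS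
  refine ⟨fun m h => hstep m (m + 1) h.le, fun m h => hstep (m + 1) m h.le,
    (monotone_or_antitone_of_feedback
      (fun _ _ h => dotProduct_le_dotProduct_of_nonneg_right h ht0) hstep).imp
      (fun h i _ _ hab => h hab i) (fun h i _ _ hab => h hab i),
    L, hL, ?_⟩
  nth_rewrite 1 [← hfix]
  rw [smul_vecMul, vecMul_vecMul, nonsing_inv_mul _ (hunit _ (hx _ hLS)), vecMul_one]

theorem stmt14 (n : ℕ) (d lam q : ℝ) (hd : 0 < d) (hlam : 0 < lam) (hq : 0 ≤ q)
    (T : Matrix (Fin n) (Fin n) ℝ)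
    (hoff : ∀ i j, i ≠ j → 0 ≤ T i j) (hrow : ∀ i, ∑ j, T i j ≤ 0)
    (heig : ∀ μ ∈ spectrum ℂ (T.map (Complex.ofReal : ℝ → ℂ)), μ.re < 0)
    (α : Fin n → ℝ) (hα0 : ∀ i, 0 ≤ α i) (hα1 : ∑ i, α i = 1)
    (t : Fin n → ℝ) (ht : t = (-T).mulVec 1)
    (π : ℕ → Fin n → ℝ)
    (hrec : ∀ m : ℕ, π (m + 1) = lam • Matrix.vecMul α
      ((lam + q - d * (π m ⬝ᵥ t)) • (1 : Matrix (Fin n) (Fin n) ℝ) - d • T)⁻¹)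
    (hbd : ∀ m : ℕ, 0 ≤ π m ⬝ᵥ t ∧ π m ⬝ᵥ t < lam / d) :
    (∀ m : ℕ, π (m + 1) ⬝ᵥ t > π m ⬝ᵥ t → ∀ i, π (m + 1) i ≤ π (m + 2) i) ∧
    (∀ m : ℕ, π (m + 1) ⬝ᵥ t < π m ⬝ᵥ t → ∀ i, π (m + 2) i ≤ π (m + 1) i) ∧
    ((∀ i, Monotone (fun m : ℕ => π (m + 1) i)) ∨
      (∀ i, Antitone (fun m : ℕ => π (m + 1) i))) ∧
    ∃ πs : Fin n → ℝ, Tendsto π atTop (𝓝 πs) ∧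
      Matrix.vecMul πs
        ((lam + q - d * (πs ⬝ᵥ t)) • (1 : Matrix (Fin n) (Fin n) ℝ) - d • T) = lam • α :=
  stmt14_general n d lam q hd hlam hq T hoff hrow heig α hα0 t ht π hrec hbd
end

section
/- Let π be the fixed point of g(x) = (λ/d) α(((λ+q)/d − x)I − T)^{-1} t in the variable x = π t, with 0 < π t < λ/d. Then g'(π t) = π(((λ+q)/d − π t)I − T)^{-1} t, and if π·1 ≤ 1 and π t > 0 this derivative lies in (0, 1). -/
/-!
With `s = (λ + q)/d - πt > 0`, the matrix `M = s • 1 - T` has nonpositive off-diagonal entries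
and positive row sums, so by the discrete maximum principle it is invertible and its inverse `N`
is entrywise nonnegative with positive diagonal. The derivative of the resolvent
`x ↦ ((c - x) • 1 - T)⁻¹` is its square, and the characterizing equation `λ αN = d π` turns
`(λ/d) αN²t` into `πNt`. Since `M 1 = s 1 + t`, we get `1 = s N1 + Nt`, so
`πNt = π1 - s πN1 < π1 ≤ 1`, while `πNt > 0` because `N` has positive diagonal and `πt > 0`.
-/

open Matrix

attribute [local instance] Matrix.linftyOpNormedRing Matrix.linftyOpNormedAlgebra

section ZMatrix

variable {ι : Type*} [Fintype ι] {M : Matrix ι ι ℝ}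

/-- Discrete maximum principle: look at a coordinate where `x` is smallest. -/
theorem nonneg_of_nonneg_mulVec_of_offDiag_nonpos (hoff : ∀ i j, i ≠ j → M i j ≤ 0)
    (hrow : ∀ i, 0 < ∑ j, M i j) {x : ι → ℝ} (hx : 0 ≤ M *ᵥ x) : 0 ≤ x := by
  by_contra hneg
  obtain ⟨k, hk⟩ : ∃ k, x k < 0 := by simpa [Pi.le_def] using hneg
  obtain ⟨i, -, hmin⟩ := Finset.exists_min_image Finset.univ x ⟨k, Finset.mem_univ k⟩
  have hterm : ∀ j, M i j * x j ≤ M i j * x i := by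
    intro j
    rcases eq_or_ne i j with rfl | hij
    · rfl
    · exact mul_le_mul_of_nonpos_left (hmin j (Finset.mem_univ j)) (hoff i j hij)
  have : (M *ᵥ x) i < 0 :=
    calc (M *ᵥ x) i = ∑ j, M i j * x j := rfl
      _ ≤ ∑ j, M i j * x i := Finset.sum_le_sum fun j _ => hterm j
      _ = (∑ j, M i j) * x i := (Finset.sum_mul ..).symm
      _ < 0 := mul_neg_of_pos_of_neg (hrow i) ((hmin k (Finset.mem_univ k)).trans_lt hk)
  exact this.not_ge (hx i)

variable [DecidableEq ι]

theorem isUnit_of_offDiag_nonpos_of_sum_row_pos (hoff : ∀ i j, i ≠ j → M i j ≤ 0)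
    (hrow : ∀ i, 0 < ∑ j, M i j) : IsUnit M := by
  refine mulVec_injective_iff_isUnit.mp fun x y hxy => le_antisymm ?_ ?_ <;>
    refine sub_nonneg.mp (nonneg_of_nonneg_mulVec_of_offDiag_nonpos hoff hrow ?_) <;>
    rw [mulVec_sub, hxy, sub_self]

theorem mul_inv_of_offDiag_nonpos_of_sum_row_pos (hoff : ∀ i j, i ≠ j → M i j ≤ 0)
    (hrow : ∀ i, 0 < ∑ j, M i j) : M * M⁻¹ = 1 :=
  mul_nonsing_inv M <| (isUnit_iff_isUnit_det M).mp <|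
    isUnit_of_offDiag_nonpos_of_sum_row_pos hoff hrow

theorem inv_apply_nonneg_of_offDiag_nonpos (hoff : ∀ i j, i ≠ j → M i j ≤ 0)
    (hrow : ∀ i, 0 < ∑ j, M i j) (i j : ι) : 0 ≤ M⁻¹ i j := by
  have hcol : 0 ≤ M *ᵥ (M⁻¹ *ᵥ Pi.single j 1) := by
    rw [mulVec_mulVec, mul_inv_of_offDiag_nonpos_of_sum_row_pos hoff hrow, one_mulVec]
    exact Pi.single_nonneg.mpr zero_le_one
  simpa [mulVec_single_one] using nonneg_of_nonneg_mulVec_of_offDiag_nonpos hoff hrow hcol i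

theorem inv_apply_self_pos_of_offDiag_nonpos (hoff : ∀ i j, i ≠ j → M i j ≤ 0)
    (hrow : ∀ i, 0 < ∑ j, M i j) (i : ι) : 0 < M⁻¹ i i := by
  have hdiag : 1 ≤ M i i * M⁻¹ i i :=
    calc 1 = ∑ j, M i j * M⁻¹ j i := by
          rw [← mul_apply, mul_inv_of_offDiag_nonpos_of_sum_row_pos hoff hrow, one_apply_eq]
      _ ≤ M i i * M⁻¹ i i := by
        rw [← Finset.add_sum_erase _ _ (Finset.mem_univ i), add_le_iff_nonpos_right]
        exact Finset.sum_nonpos fun j hj => mul_nonpos_of_nonpos_of_nonneg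
          (hoff i j (Finset.ne_of_mem_erase hj).symm)
          (inv_apply_nonneg_of_offDiag_nonpos hoff hrow j i)
  refine (inv_apply_nonneg_of_offDiag_nonpos hoff hrow i i).lt_of_ne fun h => ?_
  rw [← h, mul_zero] at hdiag
  exact zero_lt_one.not_ge hdiag

end ZMatrix

section SmulOneSub

variable {ι : Type*} [DecidableEq ι] {T : Matrix ι ι ℝ}

theorem smul_one_sub_apply_nonpos_of_offDiag_nonneg (hoff : ∀ i j, i ≠ j → 0 ≤ T i j) (s : ℝ) :
    ∀ i j, i ≠ j → (s • (1 : Matrix ι ι ℝ) - T) i j ≤ 0 := fun i j hij => by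
  simpa [one_apply_ne hij] using hoff i j hij

theorem sum_smul_one_sub_apply_pos [Fintype ι] (hrow : ∀ i, ∑ j, T i j ≤ 0) {s : ℝ}
    (hs : 0 < s) (i : ι) : 0 < ∑ j, (s • (1 : Matrix ι ι ℝ) - T) i j := by
  simp only [Matrix.sub_apply, Matrix.smul_apply, one_apply, smul_eq_mul, mul_ite, mul_one,
    mul_zero, Finset.sum_sub_distrib, Finset.sum_ite_eq, Finset.mem_univ, ↓reduceIte]
  linarith [hrow i]

theorem smul_inv_mulVec_one_add_inv_mulVec_neg_mulVec_one [Fintype ι] {s : ℝ}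
    (h : IsUnit (s • 1 - T)) :
    s • ((s • 1 - T)⁻¹ *ᵥ 1) + (s • 1 - T)⁻¹ *ᵥ (-T *ᵥ 1) = 1 := by
  have hM1 : (s • 1 - T) *ᵥ 1 = s • 1 + -T *ᵥ 1 := by
    rw [sub_mulVec, smul_mulVec, one_mulVec, neg_mulVec, sub_eq_add_neg]
  rw [← mulVec_smul, ← mulVec_add, ← hM1, mulVec_mulVec,
    nonsing_inv_mul _ ((isUnit_iff_isUnit_det _).mp h), one_mulVec]

end SmulOneSub

section Positivity

variable {ι : Type*} [Fintype ι]

theorem exists_pos_of_dotProduct_pos {x y : ι → ℝ} (hx : 0 ≤ x) (hy : 0 ≤ y)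
    (hxy : 0 < x ⬝ᵥ y) : ∃ i, 0 < x i ∧ 0 < y i := by
  obtain ⟨i, -, hi⟩ := Finset.exists_lt_of_sum_lt (s := Finset.univ) (f := 0)
    (g := fun i => x i * y i) (by simpa [dotProduct] using hxy)
  exact ⟨i, (hx i).lt_of_ne (left_ne_zero_of_mul hi.ne').symm,
    (hy i).lt_of_ne (right_ne_zero_of_mul hi.ne').symm⟩

theorem dotProduct_mulVec_pos_of_diag_pos {N : Matrix ι ι ℝ} (hN : ∀ i j, 0 ≤ N i j)
    (hdiag : ∀ i, 0 < N i i) {x y : ι → ℝ} (hx : 0 ≤ x) (hy : 0 ≤ y) {i : ι}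
    (hxi : 0 < x i) (hyi : 0 < y i) : 0 < x ⬝ᵥ N *ᵥ y := by
  have hNy : 0 ≤ N *ᵥ y := fun j => Finset.sum_nonneg fun k _ => mul_nonneg (hN j k) (hy k)
  have hNyi : 0 < (N *ᵥ y) i := Finset.sum_pos' (fun k _ => mul_nonneg (hN i k) (hy k))
    ⟨i, Finset.mem_univ i, mul_pos (hdiag i) hyi⟩
  exact Finset.sum_pos' (fun j _ => mul_nonneg (hx j) (hNy j))
    ⟨i, Finset.mem_univ i, mul_pos hxi hNyi⟩

end Positivity

section Resolvent

variable {ι : Type*} [Fintype ι] [DecidableEq ι]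

theorem hasDerivAt_dotProduct_resolvent_mulVec {T : Matrix ι ι ℝ} {k : ℝ}
    (hk : k ∈ resolventSet ℝ T) (a b : ι → ℝ) :
    HasDerivAt (fun z => a ⬝ᵥ resolvent T z *ᵥ b)
      (-(a ᵥ* resolvent T k ⬝ᵥ resolvent T k *ᵥ b)) k := by
  let L : Matrix ι ι ℝ →ₗ[ℝ] ℝ :=
    { toFun := fun B => a ⬝ᵥ B *ᵥ b
      map_add' := fun B C => by simp only [add_mulVec, dotProduct_add]
      map_smul' := fun r B => by simp only [smul_mulVec, dotProduct_smul, RingHom.id_apply] }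
  refine ((LinearMap.toContinuousLinearMap L).hasFDerivAt.comp_hasDerivAt k
    (spectrum.hasDerivAt_resolvent_const_left hk)).congr_deriv ?_
  change a ⬝ᵥ (-resolvent T k ^ 2) *ᵥ b = _
  rw [sq, neg_mulVec, dotProduct_neg, ← mulVec_mulVec, dotProduct_mulVec]

theorem hasDerivAt_dotProduct_inv_sub_mulVec {T : Matrix ι ι ℝ} {c x : ℝ}
    (hx : IsUnit ((c - x) • 1 - T)) (a b : ι → ℝ) :
    HasDerivAt (fun y => a ⬝ᵥ ((c - y) • 1 - T)⁻¹ *ᵥ b)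
      (a ᵥ* ((c - x) • 1 - T)⁻¹ ⬝ᵥ ((c - x) • 1 - T)⁻¹ *ᵥ b) x := by
  have hres : ∀ z : ℝ, resolvent T z = (z • (1 : Matrix ι ι ℝ) - T)⁻¹ := fun z => by
    rw [resolvent, nonsing_inv_eq_ringInverse, Algebra.algebraMap_eq_smul_one]
  have hk : c - x ∈ resolventSet ℝ T := by
    rwa [spectrum.mem_resolventSet_iff, Algebra.algebraMap_eq_smul_one]
  have h := (hasDerivAt_dotProduct_resolvent_mulVec hk a b).comp x
    ((hasDerivAt_id x).const_sub c)
  simpa only [hres, Function.comp_def, mul_neg, mul_one, neg_neg] using h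

end Resolvent

theorem stmt15_general (n : ℕ) (d lam q : ℝ) (hd : 0 < d) (hq : 0 ≤ q)
    (T : Matrix (Fin n) (Fin n) ℝ)
    (hoff : ∀ i j, i ≠ j → 0 ≤ T i j) (hrow : ∀ i, ∑ j, T i j ≤ 0)
    (α : Fin n → ℝ)
    (t : Fin n → ℝ) (ht : t = (-T).mulVec 1)
    (g : ℝ → ℝ)
    (hg : ∀ x : ℝ, g x = (lam / d) *
      (α ⬝ᵥ ((((lam + q) / d - x) • (1 : Matrix (Fin n) (Fin n) ℝ) - T)⁻¹.mulVec t)))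
    (π : Fin n → ℝ) (hπ0 : ∀ i, 0 ≤ π i)
    (hπt1 : 0 < π ⬝ᵥ t) (hπt2 : π ⬝ᵥ t < lam / d)
    (hchar : lam • Matrix.vecMul α
      (((lam + q) / d - π ⬝ᵥ t) • (1 : Matrix (Fin n) (Fin n) ℝ) - T)⁻¹ = d • π) :
    deriv g (π ⬝ᵥ t) =
      π ⬝ᵥ ((((lam + q) / d - π ⬝ᵥ t) • (1 : Matrix (Fin n) (Fin n) ℝ) - T)⁻¹.mulVec t) ∧
    ((∑ i, π i) ≤ 1 → 0 < deriv g (π ⬝ᵥ t) ∧ deriv g (π ⬝ᵥ t) < 1) := by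
  have hs : 0 < (lam + q) / d - π ⬝ᵥ t := by
    have : lam / d ≤ (lam + q) / d := by gcongr; linarith
    linarith
  have hMoff := smul_one_sub_apply_nonpos_of_offDiag_nonneg hoff ((lam + q) / d - π ⬝ᵥ t)
  have hMrow := sum_smul_one_sub_apply_pos hrow hs
  have hM := isUnit_of_offDiag_nonpos_of_sum_row_pos hMoff hMrow
  have hderiv : deriv g (π ⬝ᵥ t) = π ⬝ᵥ
      (((lam + q) / d - π ⬝ᵥ t) • (1 : Matrix (Fin n) (Fin n) ℝ) - T)⁻¹ *ᵥ t := by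
    rw [funext hg, ((hasDerivAt_dotProduct_inv_sub_mulVec hM α t).const_mul (lam / d)).deriv,
      div_mul_eq_mul_div, ← smul_eq_mul, ← smul_dotProduct, hchar, smul_dotProduct, smul_eq_mul,
      mul_div_cancel_left₀ _ hd.ne']
  have hN0 := inv_apply_nonneg_of_offDiag_nonpos hMoff hMrow
  have hNdiag := inv_apply_self_pos_of_offDiag_nonpos hMoff hMrow
  have ht0 : 0 ≤ t := fun i => by simpa [ht, mulVec, dotProduct] using hrow i
  obtain ⟨i, hπi, hti⟩ := exists_pos_of_dotProduct_pos hπ0 ht0 hπt1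
  have hsplit := congrArg (π ⬝ᵥ ·) (smul_inv_mulVec_one_add_inv_mulVec_neg_mulVec_one hM)
  simp only [← ht, dotProduct_add, dotProduct_smul, smul_eq_mul, dotProduct_one] at hsplit
  refine ⟨hderiv, fun hπ1 => hderiv ▸ ⟨?_, ?_⟩⟩
  · exact dotProduct_mulVec_pos_of_diag_pos hN0 hNdiag hπ0 ht0 hπi hti
  · have hN1 := dotProduct_mulVec_pos_of_diag_pos hN0 hNdiag hπ0 zero_le_one hπi one_pos
    nlinarith [mul_pos hs hN1]

theorem stmt15 (n : ℕ) (d lam q : ℝ) (hd : 0 < d) (hlam : 0 < lam) (hq : 0 ≤ q)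
    (T : Matrix (Fin n) (Fin n) ℝ)
    (hoff : ∀ i j, i ≠ j → 0 ≤ T i j) (hrow : ∀ i, ∑ j, T i j ≤ 0)
    (heig : ∀ μ ∈ spectrum ℂ (T.map (Complex.ofReal : ℝ → ℂ)), μ.re < 0)
    (α : Fin n → ℝ) (hα0 : ∀ i, 0 ≤ α i) (hα1 : ∑ i, α i = 1)
    (t : Fin n → ℝ) (ht : t = (-T).mulVec 1)
    (g : ℝ → ℝ)
    (hg : ∀ x : ℝ, g x = (lam / d) *
      (α ⬝ᵥ ((((lam + q) / d - x) • (1 : Matrix (Fin n) (Fin n) ℝ) - T)⁻¹.mulVec t)))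
    (π : Fin n → ℝ) (hπ0 : ∀ i, 0 ≤ π i)
    (hπt1 : 0 < π ⬝ᵥ t) (hπt2 : π ⬝ᵥ t < lam / d)
    (hfix : g (π ⬝ᵥ t) = π ⬝ᵥ t)
    (hchar : lam • Matrix.vecMul α
      (((lam + q) / d - π ⬝ᵥ t) • (1 : Matrix (Fin n) (Fin n) ℝ) - T)⁻¹ = d • π) :
    deriv g (π ⬝ᵥ t) =
      π ⬝ᵥ ((((lam + q) / d - π ⬝ᵥ t) • (1 : Matrix (Fin n) (Fin n) ℝ) - T)⁻¹.mulVec t) ∧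
    ((∑ i, π i) ≤ 1 → 0 < deriv g (π ⬝ᵥ t) ∧ deriv g (π ⬝ᵥ t) < 1) :=
  stmt15_general n d lam q hd hq T hoff hrow α t ht g hg π hπ0 hπt1 hπt2 hchar
end

section
/- Let σ > 0, d ∈ ℝ, λ > 0, q = 0, and suppose a = 2d/σ² > 0 and row vector b = (2λ/σ²)α(−T)^{-1} ≥ 0. Then the pair (a, b) solves the equations (σ²/2)(a² + b t) − d a = λ and (σ²/2)(b T − a b) + d b = −λ α. -/
open Matrix

namespace Matrix

variable {ι R : Type*} [Fintype ι] [DecidableEq ι] [CommRing R] {A : Matrix ι ι R}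

theorem vecMul_inv_vecMul (hA : IsUnit A) (v : ι → R) : v ᵥ* A⁻¹ ᵥ* A = v := by
  rw [vecMul_vecMul, nonsing_inv_mul _ ((isUnit_iff_isUnit_det A).mp hA), vecMul_one]

theorem vecMul_inv_dotProduct_mulVec (hA : IsUnit A) (v w : ι → R) :
    v ᵥ* A⁻¹ ⬝ᵥ A *ᵥ w = v ⬝ᵥ w := by
  rw [dotProduct_mulVec, vecMul_inv_vecMul hA]

theorem vecMul_neg_inv_vecMul (hA : IsUnit A) (v : ι → R) : v ᵥ* (-A)⁻¹ ᵥ* A = -v := by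
  rw [← neg_eq_iff_eq_neg, ← vecMul_neg, vecMul_inv_vecMul hA.neg]

end Matrix

theorem stmt19_general (n : ℕ) (σ d lam : ℝ) (hσ : 0 < σ)
    (T : Matrix (Fin n) (Fin n) ℝ) (hinv : IsUnit T)
    (α : Fin n → ℝ) (hα1 : ∑ i, α i = 1)
    (t : Fin n → ℝ) (ht : t = (-T).mulVec 1)
    (a : ℝ) (ha : a = 2 * d / σ ^ 2)
    (b : Fin n → ℝ) (hb : b = (2 * lam / σ ^ 2) • Matrix.vecMul α (-T)⁻¹) :
    σ ^ 2 / 2 * (a ^ 2 + b ⬝ᵥ t) - d * a = lam ∧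
    (σ ^ 2 / 2) • (Matrix.vecMul b T - a • b) + d • b = -(lam • α) := by
  have hσ2 : σ ^ 2 ≠ 0 := by positivity
  have hd : d = σ ^ 2 / 2 * a := by rw [ha]; field_simp
  have hscale : σ ^ 2 / 2 * (2 * lam / σ ^ 2) = lam := by field_simp
  have hbt : b ⬝ᵥ t = 2 * lam / σ ^ 2 := by
    rw [hb, ht, smul_dotProduct, vecMul_inv_dotProduct_mulVec hinv.neg, dotProduct_one, hα1,
      smul_eq_mul, mul_one]
  have hbT : b ᵥ* T = -((2 * lam / σ ^ 2) • α) := by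
    rw [hb, smul_vecMul, vecMul_neg_inv_vecMul hinv, smul_neg]
  refine ⟨?_, ?_⟩
  · rw [hbt, hd]
    linear_combination hscale
  · rw [hbT, hd]
    linear_combination (norm := module) -(hscale • α)

theorem stmt19 (n : ℕ) (σ d lam : ℝ) (hσ : 0 < σ) (hlam : 0 < lam)
    (T : Matrix (Fin n) (Fin n) ℝ) (hinv : IsUnit T)
    (α : Fin n → ℝ) (hα0 : ∀ i, 0 ≤ α i) (hα1 : ∑ i, α i = 1)
    (t : Fin n → ℝ) (ht : t = (-T).mulVec 1)
    (a : ℝ) (ha : a = 2 * d / σ ^ 2) (ha0 : 0 < a)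
    (b : Fin n → ℝ) (hb : b = (2 * lam / σ ^ 2) • Matrix.vecMul α (-T)⁻¹)
    (hb0 : ∀ i, 0 ≤ b i) :
    σ ^ 2 / 2 * (a ^ 2 + b ⬝ᵥ t) - d * a = lam ∧
    (σ ^ 2 / 2) • (Matrix.vecMul b T - a • b) + d • b = -(lam • α) :=
  stmt19_general n σ d lam hσ T hinv α hα1 t ht a ha b hb
end
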